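/- arXiv:0802.2322 — 10 statements merged into one kernel-verified Lean document; each statement's English description precedes it below -/
import Mathlib

section
/- For y in the interior of dom f, x in C, the point x is a farthest point of y in C with respect to the Bregman distance D_f if and only if for all c in C, D_f(c,x) ≤ ⟨∇f(y) − ∇f(x), c − x⟩. -/
open scoped RealInnerProductSpace

/-- Bregman distance for real-valued `f` with gradient `f'`. -/
noncomputable abbrev bregman {J : ℕ}
    (f : EuclideanSpace ℝ (Fin J) → ℝ) (f' : EuclideanSpace ℝ (Fin J) → EuclideanSpace ℝ (Fin J))
    (x y : EuclideanSpace ℝ (Fin J)) : ℝ :=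
  f x - f y - ⟪f' y, x - y⟫

section Bregman

variable {J : ℕ} (f : EuclideanSpace ℝ (Fin J) → ℝ)
  (f' : EuclideanSpace ℝ (Fin J) → EuclideanSpace ℝ (Fin J))

theorem bregman_three_point (c x y : EuclideanSpace ℝ (Fin J)) :
    bregman f f' c y = bregman f f' c x + bregman f f' x y + ⟪f' x - f' y, c - x⟫ := by
  simp only [bregman, inner_sub_left, inner_sub_right]
  ring

theorem bregman_le_bregman_iff (c x y : EuclideanSpace ℝ (Fin J)) :
    bregman f f' c y ≤ bregman f f' x y ↔ bregman f f' c x ≤ ⟪f' y - f' x, c - x⟫ := by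
  rw [bregman_three_point f f' c x y, ← neg_sub (f' y) (f' x), inner_neg_left]
  constructor <;> intro h <;> linarith

end Bregman

theorem farthest_point_characterization_general {J : ℕ}
    (f : EuclideanSpace ℝ (Fin J) → ℝ)
    (f' : EuclideanSpace ℝ (Fin J) → EuclideanSpace ℝ (Fin J))
    (C : Set (EuclideanSpace ℝ (Fin J)))
    (y : EuclideanSpace ℝ (Fin J))
    (x : EuclideanSpace ℝ (Fin J)) :
    (∀ c ∈ C, bregman f f' c y ≤ bregman f f' x y) ↔
      (∀ c ∈ C, bregman f f' c x ≤ ⟪f' y - f' x, c - x⟫) :=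
  forall₂_congr fun c _ => bregman_le_bregman_iff f f' c x y

theorem farthest_point_characterization {J : ℕ}
    (f : EuclideanSpace ℝ (Fin J) → ℝ) (U : Set (EuclideanSpace ℝ (Fin J)))
    (hU : IsOpen U) (hUne : U.Nonempty)
    (hconv : ConvexOn ℝ U f)
    (f' : EuclideanSpace ℝ (Fin J) → EuclideanSpace ℝ (Fin J))
    (hf' : ∀ y ∈ U, HasGradientAt f (f' y) y)
    (C : Set (EuclideanSpace ℝ (Fin J))) (hCne : C.Nonempty)
    (hCcp : IsCompact C) (hCb : Bornology.IsBounded C) (hCcl : IsClosed C) (hCU : C ⊆ U)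
    (y : EuclideanSpace ℝ (Fin J)) (hy : y ∈ U)
    (x : EuclideanSpace ℝ (Fin J)) (hx : x ∈ C) :
    (∀ c ∈ C, bregman f f' c y ≤ bregman f f' x y) ↔
      (∀ c ∈ C, bregman f f' c x ≤ ⟪f' y - f' x, c - x⟫) :=
  farthest_point_characterization_general f f' C y x
end

section
/- Suppose f is a Legendre function on ℝ^J with U = int dom f, C ⊆ U nonempty compact, y ∈ U, x a farthest point of y in C (w.r.t. the left Bregman distance), λ > 1, and z := ∇f*(λ∇f(y) + (1−λ)∇f(x)) ∈ U. Then x is the unique farthest point of z in C. -/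
/-!
Expanding the definitions, `∇f(z) = λ∇f(y) + (1-λ)∇f(x)` gives for every `c` the identity
`D(c,z) - D(x,z) = λ (D(c,y) - D(x,y)) - (λ-1) D(c,x)`.
The first term is `≤ 0` because `x` is farthest from `y`, and the second is `< 0` for `c ≠ x`
because `D(c,x) > 0` by strict convexity. Hence `x` is the strict maximiser of `D(·,z)` on `C`.
-/

open scoped RealInnerProductSpace

section GradientInequality

variable {E : Type*} [NormedAddCommGroup E] [NormedSpace ℝ E]
  {f : E → ℝ} {f' : E →L[ℝ] ℝ} {s : Set E} {x y : E}

theorem ConvexOn.le_sub_of_hasFDerivAt (hf : ConvexOn ℝ s f) (hx : x ∈ s) (hy : y ∈ s)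
    (hf' : HasFDerivAt f f' x) : f' (y - x) ≤ f y - f x := by
  set g : ℝ → ℝ := f ∘ AffineMap.lineMap x y
  have hg : ConvexOn ℝ (Set.Icc 0 1) g := by
    refine (hf.comp_affineMap _).subset (fun t ht => ?_) (convex_Icc 0 1)
    exact hf.1.segment_subset hx hy (segment_eq_image_lineMap ℝ x y ▸ ⟨t, ht, rfl⟩)
  have hline : HasDerivAt (AffineMap.lineMap x y : ℝ → E) (y - x) 0 := by
    simpa using AffineMap.hasDerivAt_lineMap (a := x) (b := y) (x := (0 : ℝ))
  have hg' : HasDerivAt g (f' (y - x)) 0 := by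
    refine HasFDerivAt.comp_hasDerivAt (0 : ℝ) ?_ hline
    simpa using hf'
  simpa [g, slope_def_field] using
    hg.le_slope_of_hasDerivAt (by simp) (by simp) zero_lt_one hg'

/-- The strict inequality is reduced to the non-strict one at the midpoint of `x` and `y`. -/
theorem StrictConvexOn.lt_sub_of_hasFDerivAt (hf : StrictConvexOn ℝ s f) (hx : x ∈ s)
    (hy : y ∈ s) (hxy : x ≠ y) (hf' : HasFDerivAt f f' x) : f' (y - x) < f y - f x := by
  set m : E := (1 / 2 : ℝ) • x + (1 / 2 : ℝ) • y
  have hm : m ∈ s := hf.1 hx hy (by norm_num) (by norm_num) (by norm_num)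
  have hle : f' (m - x) ≤ f m - f x := hf.convexOn.le_sub_of_hasFDerivAt hx hm hf'
  have hlt : f m < (1 / 2 : ℝ) * f x + (1 / 2 : ℝ) * f y :=
    hf.2 hx hy hxy (by norm_num) (by norm_num) (by norm_num)
  have hmx : m - x = (1 / 2 : ℝ) • (y - x) := by module
  rw [hmx, map_smul, smul_eq_mul] at hle
  linarith

end GradientInequality

section Bregman

variable {J : ℕ} {f : EuclideanSpace ℝ (Fin J) → ℝ}
  {f' : EuclideanSpace ℝ (Fin J) → EuclideanSpace ℝ (Fin J)}

theorem bregman_pos {U : Set (EuclideanSpace ℝ (Fin J))} (hf : StrictConvexOn ℝ U f)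
    {a b : EuclideanSpace ℝ (Fin J)} (ha : a ∈ U) (hb : b ∈ U) (hab : a ≠ b)
    (hgrad : HasGradientAt f (f' b) b) : 0 < bregman f f' a b := by
  have := hf.lt_sub_of_hasFDerivAt hb ha hab.symm (hasGradientAt_iff_hasFDerivAt.mp hgrad)
  rw [InnerProductSpace.toDual_apply_apply] at this
  exact sub_pos.mpr this

theorem bregman_sub_bregman_of_gradient_eq {lam : ℝ} {x y z : EuclideanSpace ℝ (Fin J)}
    (hzgrad : f' z = lam • f' y + (1 - lam) • f' x) (c : EuclideanSpace ℝ (Fin J)) :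
    bregman f f' c z - bregman f f' x z =
      lam * (bregman f f' c y - bregman f f' x y) - (lam - 1) * bregman f f' c x := by
  simp only [bregman, hzgrad, inner_add_left, real_inner_smul_left, inner_sub_right]
  ring

theorem bregman_lt_of_isMaxOn_of_gradient_eq {U C : Set (EuclideanSpace ℝ (Fin J))}
    (hf : StrictConvexOn ℝ U f) (hCU : C ⊆ U) {lam : ℝ} (hlam : 1 < lam)
    {x y z : EuclideanSpace ℝ (Fin J)} (hx : x ∈ C) (hgrad : HasGradientAt f (f' x) x)
    (hfar : IsMaxOn (fun c => bregman f f' c y) C x)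
    (hzgrad : f' z = lam • f' y + (1 - lam) • f' x) {c : EuclideanSpace ℝ (Fin J)}
    (hc : c ∈ C) (hcx : c ≠ x) : bregman f f' c z < bregman f f' x z := by
  have hfar_c : bregman f f' c y ≤ bregman f f' x y := hfar hc
  have hpos : 0 < bregman f f' c x := bregman_pos hf (hCU hc) (hCU hx) hcx hgrad
  have hident := bregman_sub_bregman_of_gradient_eq (f := f) hzgrad c
  nlinarith

end Bregman

theorem unique_farthest_of_pushout_general {J : ℕ}
    (f : EuclideanSpace ℝ (Fin J) → ℝ) (U : Set (EuclideanSpace ℝ (Fin J)))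
    -- `f` is essentially strictly convex: strictly convex on `U`
    (hconv : StrictConvexOn ℝ U f)
    -- `f` is differentiable on `U` with gradient `f'`
    (f' : EuclideanSpace ℝ (Fin J) → EuclideanSpace ℝ (Fin J))
    (hf' : ∀ y ∈ U, HasGradientAt f (f' y) y)
    (C : Set (EuclideanSpace ℝ (Fin J))) (hCU : C ⊆ U)
    (y : EuclideanSpace ℝ (Fin J))
    (x : EuclideanSpace ℝ (Fin J)) (hx : x ∈ C)
    (hfar : ∀ c ∈ C, bregman f f' c y ≤ bregman f f' x y)
    (lam : ℝ) (hlam : 1 < lam)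
    -- `z := ∇f*(λ∇f(y) + (1-λ)∇f(x))`, assumed to lie in `U`
    (z : EuclideanSpace ℝ (Fin J))
    (hzgrad : f' z = lam • f' y + (1 - lam) • f' x) :
    (∀ c ∈ C, bregman f f' c z ≤ bregman f f' x z) ∧
      (∀ x' ∈ C, (∀ c ∈ C, bregman f f' c z ≤ bregman f f' x' z) → x' = x) := by
  have hlt : ∀ c ∈ C, c ≠ x → bregman f f' c z < bregman f f' x z := fun c hc hcx =>
    bregman_lt_of_isMaxOn_of_gradient_eq hconv hCU hlam hx (hf' x (hCU hx)) hfar hzgrad hc hcx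
  refine ⟨fun c hc => ?_, fun x' hx' hfar' => ?_⟩
  · rcases eq_or_ne c x with rfl | hcx
    · exact le_rfl
    · exact (hlt c hc hcx).le
  · by_contra hne
    exact (hlt x' hx' hne).not_ge (hfar' x hx)

/-- If `x` is a farthest point of `y` in `C` w.r.t. the left Bregman distance of a Legendre
function `f`, `λ > 1`, and `z = ∇f*(λ∇f(y) + (1-λ)∇f(x)) ∈ U`, then `x` is the unique
farthest point of `z` in `C`. -/
theorem unique_farthest_of_pushout {J : ℕ}
    (f : EuclideanSpace ℝ (Fin J) → ℝ) (U : Set (EuclideanSpace ℝ (Fin J)))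
    (hU : IsOpen U) (hUne : U.Nonempty)
    -- `f` is essentially strictly convex: strictly convex on `U`
    (hconv : StrictConvexOn ℝ U f)
    -- `f` is differentiable on `U` with gradient `f'`
    (f' : EuclideanSpace ℝ (Fin J) → EuclideanSpace ℝ (Fin J))
    (hf' : ∀ y ∈ U, HasGradientAt f (f' y) y)
    -- `∇f` is injective on `U` (Legendre: a bijection onto `int dom f*`)
    (hinj : ∀ a ∈ U, ∀ b ∈ U, f' a = f' b → a = b)
    (C : Set (EuclideanSpace ℝ (Fin J))) (hCne : C.Nonempty)
    (hCcp : IsCompact C) (hCU : C ⊆ U)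
    (y : EuclideanSpace ℝ (Fin J)) (hy : y ∈ U)
    (x : EuclideanSpace ℝ (Fin J)) (hx : x ∈ C)
    (hfar : ∀ c ∈ C, bregman f f' c y ≤ bregman f f' x y)
    (lam : ℝ) (hlam : 1 < lam)
    -- `z := ∇f*(λ∇f(y) + (1-λ)∇f(x))`, assumed to lie in `U`
    (z : EuclideanSpace ℝ (Fin J)) (hz : z ∈ U)
    (hzgrad : f' z = lam • f' y + (1 - lam) • f' x) :
    (∀ c ∈ C, bregman f f' c z ≤ bregman f f' x z) ∧
      (∀ x' ∈ C, (∀ c ∈ C, bregman f f' c z ≤ bregman f f' x' z) → x' = x) :=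
  unique_farthest_of_pushout_general f U hconv f' hf' C hCU y x hx hfar lam hlam z hzgrad
end

section
/- The left Bregman farthest-distance function y ↦ sup_{c∈C} D_f(c,y) is continuous on U; if in addition ∇f is locally Lipschitz on U (e.g. f is twice continuously differentiable), then the farthest-distance function is locally Lipschitz on U. -/
/-!
Since `D_f(c, y) = (f c - ⟪∇f y, c⟫) + (⟪∇f y, y⟫ - f y)`, the farthest distance equals
`σ (∇f y) + ⟪∇f y, y⟫ - f y`, where `σ g = sup_{c ∈ C} (f c - ⟪g, c⟫)` is a supremum of affine
functions with slopes `-c`, hence Lipschitz with constant `max_C ‖c‖`. Everything thus reduces to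
the regularity of `∇f`. The gradient of a differentiable convex function on an open set is
continuous: the gradient inequality bounds `⟪∇f z, v⟫` by the difference quotient
`(f (z + t • v) - f z) / t`, which is continuous in `z` and close to `⟪∇f y, v⟫` for small `t > 0`,
so `⟪∇f ·, v⟫` is upper semicontinuous, and applying this to `-v` gives lower semicontinuity.
Where `∇f` is Lipschitz it is also bounded, so `f` and `y ↦ ⟪∇f y, y⟫` are Lipschitz there too.
-/

open scoped RealInnerProductSpace

open Set Filter Topology Metric
open scoped NNReal

section ConvexGradient

variable {E : Type*} [NormedAddCommGroup E] [NormedSpace ℝ E] {s : Set E} {f : E → ℝ}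

theorem ConvexOn.apply_sub_le_of_hasFDerivAt {f' : StrongDual ℝ E} {x y : E}
    (hf : ConvexOn ℝ s f) (hx : x ∈ s) (hy : y ∈ s) (hf' : HasFDerivAt f f' x) :
    f' (y - x) ≤ f y - f x := by
  let ℓ : ℝ →ᵃ[ℝ] E := AffineMap.lineMap x y
  have hderiv : HasDerivAt (f ∘ ℓ) (f' (y - x)) 0 := by
    have hf'0 : HasFDerivAt f f' (ℓ 0) := by simpa [ℓ] using hf'
    simpa using hf'0.comp_hasDerivAt (0 : ℝ) AffineMap.hasDerivAt_lineMap
  simpa [slope_def_field, ℓ] using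
    (hf.comp_affineMap ℓ).le_slope_of_hasDerivAt (by simpa [ℓ] using hx) (by simpa [ℓ] using hy)
      zero_lt_one hderiv

variable {f' : E → StrongDual ℝ E}

theorem ConvexOn.eventually_apply_lt_of_hasFDerivAt (hs : IsOpen s) (hf : ConvexOn ℝ s f)
    (hf' : ∀ x ∈ s, HasFDerivAt f (f' x) x) {y : E} (hy : y ∈ s) (v : E) {r : ℝ}
    (hr : f' y v < r) : ∀ᶠ z in 𝓝 y, f' z v < r := by
  have hline : HasDerivAt (fun t : ℝ => f (y + t • v)) (f' y v) 0 := by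
    have hf'0 : HasFDerivAt f (f' y) (y + (0 : ℝ) • v) := by simpa using hf' y hy
    simpa [Function.comp_def] using
      hf'0.comp_hasDerivAt (0 : ℝ) (((hasDerivAt_id 0).smul_const v).const_add y)
  have hslope : ∀ᶠ t in 𝓝[>] (0 : ℝ), (f (y + t • v) - f y) / t < r ∧ y + t • v ∈ s := by
    have hmem : ∀ᶠ t in 𝓝 (0 : ℝ), y + t • v ∈ s :=
      (Continuous.tendsto' (by fun_prop) 0 y (by simp)).eventually (hs.mem_nhds hy)
    filter_upwards [(hasDerivAt_iff_tendsto_slope.1 hline).mono_left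
      (nhdsWithin_mono _ fun t ht => ne_of_gt ht) |>.eventually (gt_mem_nhds hr),
      nhdsWithin_le_nhds hmem] with t ht htv
    simpa [slope_def_field] using And.intro ht htv
  obtain ⟨t, ⟨hyt, hyts⟩, ht⟩ := (hslope.and self_mem_nhdsWithin).exists
  have hcont : ContinuousAt (fun z => (f (z + t • v) - f z) / t) y :=
    (((hf' _ hyts).continuousAt.comp_of_eq (continuous_add_const (t • v)).continuousAt rfl).sub
      (hf' y hy).continuousAt).div_const t
  filter_upwards [hcont.eventually (gt_mem_nhds hyt), hs.mem_nhds hy,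
    (continuous_add_const (t • v)).continuousAt.preimage_mem_nhds (hs.mem_nhds hyts)]
    with z hzr hz hztv
  have hsub : t * f' z v ≤ f (z + t • v) - f z := by
    simpa using hf.apply_sub_le_of_hasFDerivAt hz hztv (hf' z hz)
  calc f' z v ≤ (f (z + t • v) - f z) / t := by rw [le_div_iff₀ ht]; linarith
    _ < r := hzr

theorem ConvexOn.continuousOn_of_hasFDerivAt [FiniteDimensional ℝ E] (hs : IsOpen s)
    (hf : ConvexOn ℝ s f) (hf' : ∀ x ∈ s, HasFDerivAt f (f' x) x) : ContinuousOn f' s := by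
  refine continuousOn_clm_apply.2 fun v => hs.continuousOn_iff.2 fun y hy =>
    tendsto_order.2 ⟨fun a ha => ?_,
      fun b hb => hf.eventually_apply_lt_of_hasFDerivAt hs hf' hy v hb⟩
  filter_upwards [hf.eventually_apply_lt_of_hasFDerivAt hs hf' hy (-v) (r := -a)
    (by simpa using ha)] with z hz
  simpa using hz

end ConvexGradient

section Gradient

variable {E : Type*} [NormedAddCommGroup E] [InnerProductSpace ℝ E] [CompleteSpace E]
  {s : Set E} {f : E → ℝ} {f' : E → E}

theorem ConvexOn.continuousOn_of_hasGradientAt [FiniteDimensional ℝ E] (hs : IsOpen s)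
    (hf : ConvexOn ℝ s f) (hf' : ∀ x ∈ s, HasGradientAt f (f' x) x) : ContinuousOn f' s := by
  have hdual := hf.continuousOn_of_hasFDerivAt hs fun x hx => (hf' x hx).hasFDerivAt
  simpa [Function.comp_def] using
    (InnerProductSpace.toDual ℝ E).symm.continuous.comp_continuousOn hdual

theorem Convex.lipschitzOnWith_of_norm_hasGradientAt_le {A : ℝ≥0} (hs : Convex ℝ s)
    (hf : ∀ x ∈ s, HasGradientAt f (f' x) x) (hA : ∀ x ∈ s, ‖f' x‖ ≤ A) :
    LipschitzOnWith A f s :=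
  hs.lipschitzOnWith_of_nnnorm_hasFDerivWithin_le
    (fun x hx => (hf x hx).hasFDerivAt.hasFDerivWithinAt) fun x hx => by
      rw [← NNReal.coe_le_coe, coe_nnnorm, LinearIsometryEquiv.norm_map]
      exact hA x hx

end Gradient

section Lipschitz

variable {α ι F : Type*} [PseudoMetricSpace α] [SeminormedAddCommGroup F]

theorem LipschitzWith.sSup_image {K : ℝ≥0} {C : Set ι} (hC : C.Nonempty) {u : ι → α → ℝ}
    (hu : ∀ c ∈ C, LipschitzWith K (u c)) (hbdd : ∀ x, BddAbove ((u · x) '' C)) :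
    LipschitzWith K fun x => sSup ((u · x) '' C) :=
  LipschitzWith.of_le_add_mul K fun x y => csSup_le (hC.image _) <| by
    rintro _ ⟨c, hc, rfl⟩
    exact ((hu c hc).le_add_mul x y).trans
      (add_le_add_left (le_csSup (hbdd y) ⟨c, hc, rfl⟩) _)

theorem LipschitzOnWith.norm_le_add_mul_of_mem_ball {K : ℝ≥0} {g : α → F} {y z : α} {ε : ℝ}
    (hg : LipschitzOnWith K g (ball y ε)) (hz : z ∈ ball y ε) : ‖g z‖ ≤ ‖g y‖ + K * ε := by
  have hy : y ∈ ball y ε := mem_ball_self (pos_of_mem_ball hz)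
  calc ‖g z‖ ≤ ‖g y‖ + dist (g z) (g y) := by
        rw [dist_eq_norm]; exact norm_le_norm_add_norm_sub' _ _
    _ ≤ ‖g y‖ + K * ε := by
        gcongr
        exact (hg.dist_le_mul z hz y hy).trans
          (mul_le_mul_of_nonneg_left (mem_ball.1 hz).le K.coe_nonneg)

variable {E : Type*} [NormedAddCommGroup E] [InnerProductSpace ℝ E]

theorem LipschitzOnWith.inner {s : Set α} {u v : α → E} {Ku Kv A B : ℝ≥0}
    (hu : LipschitzOnWith Ku u s) (hv : LipschitzOnWith Kv v s) (hA : ∀ x ∈ s, ‖u x‖ ≤ A)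
    (hB : ∀ x ∈ s, ‖v x‖ ≤ B) : LipschitzOnWith (Ku * B + A * Kv) (fun x => ⟪u x, v x⟫) s := by
  refine LipschitzOnWith.of_dist_le_mul fun x hx y hy => ?_
  have hsplit : ⟪u x, v x⟫ - ⟪u y, v y⟫ = ⟪u x - u y, v x⟫ + ⟪u y, v x - v y⟫ := by
    simp only [inner_sub_left, inner_sub_right]; ring
  have hux : ‖u x - u y‖ ≤ Ku * dist x y := by rw [← dist_eq_norm]; exact hu.dist_le_mul x hx y hy
  have hvx : ‖v x - v y‖ ≤ Kv * dist x y := by rw [← dist_eq_norm]; exact hv.dist_le_mul x hx y hy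
  rw [Real.dist_eq, hsplit]
  calc |⟪u x - u y, v x⟫ + ⟪u y, v x - v y⟫|
      ≤ ‖u x - u y‖ * ‖v x‖ + ‖u y‖ * ‖v x - v y‖ :=
        (abs_add_le _ _).trans
          (add_le_add (abs_real_inner_le_norm _ _) (abs_real_inner_le_norm _ _))
    _ ≤ (Ku * dist x y) * B + A * (Kv * dist x y) := by
        gcongr
        exacts [hB x hx, hA y hy]
    _ = (↑(Ku * B + A * Kv) : ℝ) * dist x y := by push_cast; ring

end Lipschitz

section SupInner

variable {E : Type*} [NormedAddCommGroup E] [InnerProductSpace ℝ E] {f : E → ℝ} {C : Set E}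

theorem IsCompact.bddAbove_image_sub_inner (hC : IsCompact C) (hfC : ContinuousOn f C) (g : E) :
    BddAbove ((fun c => f c - ⟪g, c⟫) '' C) :=
  hC.bddAbove_image (hfC.sub (continuous_const.inner continuous_id).continuousOn)

theorem IsCompact.lipschitzWith_sSup_image_sub_inner (hC : IsCompact C) (hCne : C.Nonempty)
    (hfC : ContinuousOn f C) {M : ℝ≥0} (hM : ∀ c ∈ C, ‖c‖ ≤ M) :
    LipschitzWith M fun g : E => sSup ((fun c => f c - ⟪g, c⟫) '' C) := by
  refine LipschitzWith.sSup_image hCne (fun c hc => ?_) (hC.bddAbove_image_sub_inner hfC)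
  refine LipschitzWith.of_dist_le_mul fun g₁ g₂ => ?_
  rw [Real.dist_eq, dist_eq_norm, sub_sub_sub_cancel_left, ← inner_sub_left]
  calc |⟪g₂ - g₁, c⟫| ≤ ‖g₂ - g₁‖ * ‖c‖ := abs_real_inner_le_norm _ _
    _ ≤ ‖g₂ - g₁‖ * M := by gcongr; exact hM c hc
    _ = M * ‖g₁ - g₂‖ := by rw [norm_sub_rev, mul_comm]

end SupInner

theorem sSup_image_bregman_eq {J : ℕ} {f : EuclideanSpace ℝ (Fin J) → ℝ}
    {f' : EuclideanSpace ℝ (Fin J) → EuclideanSpace ℝ (Fin J)} {C : Set (EuclideanSpace ℝ (Fin J))}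
    (hCne : C.Nonempty) {y : EuclideanSpace ℝ (Fin J)}
    (hbdd : BddAbove ((fun c => f c - ⟪f' y, c⟫) '' C)) :
    sSup ((fun c => bregman f f' c y) '' C) =
      sSup ((fun c => f c - ⟪f' y, c⟫) '' C) + (⟪f' y, y⟫ - f y) := by
  have hsplit : (fun c => bregman f f' c y) =
      OrderIso.addRight (⟪f' y, y⟫ - f y) ∘ fun c => f c - ⟪f' y, c⟫ := by
    ext c
    simp only [bregman, Function.comp_apply, OrderIso.addRight_apply, inner_sub_right]
    ring
  rw [hsplit, image_comp, ← OrderIso.map_csSup' _ (hCne.image _) hbdd, OrderIso.addRight_apply]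

theorem farthest_distance_continuous_and_locally_lipschitz_general {J : ℕ}
    (f : EuclideanSpace ℝ (Fin J) → ℝ) (U : Set (EuclideanSpace ℝ (Fin J)))
    (hU : IsOpen U)
    (hconv : StrictConvexOn ℝ U f)
    (f' : EuclideanSpace ℝ (Fin J) → EuclideanSpace ℝ (Fin J))
    (hf' : ∀ y ∈ U, HasGradientAt f (f' y) y)
    (C : Set (EuclideanSpace ℝ (Fin J))) (hCne : C.Nonempty)
    (hCcp : IsCompact C) (hCU : C ⊆ U) :
    ContinuousOn (fun y => sSup ((fun c => bregman f f' c y) '' C)) U ∧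
      ((∀ y ∈ U, ∃ (K : NNReal) (ε : ℝ), 0 < ε ∧ Metric.ball y ε ⊆ U ∧
          LipschitzOnWith K f' (Metric.ball y ε)) →
        ∀ y ∈ U, ∃ (K : NNReal) (ε : ℝ), 0 < ε ∧ Metric.ball y ε ⊆ U ∧
          LipschitzOnWith K (fun z => sSup ((fun c => bregman f f' c z) '' C))
            (Metric.ball y ε)) := by
  have hfc : ContinuousOn f U := fun y hy => (hf' y hy).continuousAt.continuousWithinAt
  have hf'c : ContinuousOn f' U := hconv.convexOn.continuousOn_of_hasGradientAt hU hf'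
  obtain ⟨M, -, hM⟩ := hCcp.isBounded.exists_pos_norm_le
  have hσ := hCcp.lipschitzWith_sSup_image_sub_inner hCne (hfc.mono hCU) (M := M.toNNReal)
    fun c hc => (hM c hc).trans (Real.le_coe_toNNReal M)
  have hsplit : (fun y => sSup ((fun c => bregman f f' c y) '' C)) = fun y =>
      sSup ((fun c => f c - ⟪f' y, c⟫) '' C) + (⟪f' y, y⟫ - f y) :=
    funext fun y => sSup_image_bregman_eq hCne (hCcp.bddAbove_image_sub_inner (hfc.mono hCU) _)
  rw [hsplit]
  refine ⟨(hσ.continuous.comp_continuousOn hf'c).add ((hf'c.inner continuousOn_id).sub hfc), ?_⟩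
  intro hloc y hy
  obtain ⟨K, ε, hε, hball, hK⟩ := hloc y hy
  have hA (z) (hz : z ∈ ball y ε) : ‖f' z‖ ≤ (‖f' y‖ + K * ε).toNNReal :=
    (hK.norm_le_add_mul_of_mem_ball hz).trans (Real.le_coe_toNNReal _)
  have hR (z) (hz : z ∈ ball y ε) : ‖z‖ ≤ (‖y‖ + ε).toNNReal := by
    simpa using (LipschitzWith.id.lipschitzOnWith.norm_le_add_mul_of_mem_ball hz).trans
      (Real.le_coe_toNNReal (‖y‖ + 1 * ε))
  have hfL := (convex_ball y ε).lipschitzOnWith_of_norm_hasGradientAt_le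
    (fun z hz => hf' z (hball hz)) hA
  exact ⟨_, ε, hε, hball, (hσ.comp_lipschitzOnWith hK).add
    ((hK.inner LipschitzWith.id.lipschitzOnWith hA hR).sub hfL)⟩

/-- The left Bregman farthest-distance function `y ↦ sup_{c∈C} D_f(c,y)` is continuous
on `U`; if moreover `∇f` is locally Lipschitz on `U`, then so is the farthest-distance
function. -/
theorem farthest_distance_continuous_and_locally_lipschitz {J : ℕ}
    (f : EuclideanSpace ℝ (Fin J) → ℝ) (U : Set (EuclideanSpace ℝ (Fin J)))
    (hU : IsOpen U) (hUne : U.Nonempty)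
    (hconv : StrictConvexOn ℝ U f)
    (f' : EuclideanSpace ℝ (Fin J) → EuclideanSpace ℝ (Fin J))
    (hf' : ∀ y ∈ U, HasGradientAt f (f' y) y)
    (hcoer : Filter.Tendsto (fun x : EuclideanSpace ℝ (Fin J) => f x / ‖x‖)
      (Filter.comap norm Filter.atTop) Filter.atTop)
    (C : Set (EuclideanSpace ℝ (Fin J))) (hCne : C.Nonempty)
    (hCcp : IsCompact C) (hCU : C ⊆ U) :
    ContinuousOn (fun y => sSup ((fun c => bregman f f' c y) '' C)) U ∧
      ((∀ y ∈ U, ∃ (K : NNReal) (ε : ℝ), 0 < ε ∧ Metric.ball y ε ⊆ U ∧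
          LipschitzOnWith K f' (Metric.ball y ε)) →
        ∀ y ∈ U, ∃ (K : NNReal) (ε : ℝ), 0 < ε ∧ Metric.ball y ε ⊆ U ∧
          LipschitzOnWith K (fun z => sSup ((fun c => bregman f f' c z) '' C))
            (Metric.ball y ε)) :=
  farthest_distance_continuous_and_locally_lipschitz_general f U hU hconv f' hf' C hCne hCcp hCU
end

section
/- If x_n → x in U, c_n ∈ C is a farthest point of x_n in C for each n, and c_n → c̄, then c̄ is a farthest point of x in C. Consequently the left Bregman farthest-point map is compact-valued and upper semicontinuous on U. -/
open scoped RealInnerProductSpace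

/-- The left Bregman farthest-point map `Q_C` of a compact set `C`. -/
def farthestSet {J : ℕ}
    (f : EuclideanSpace ℝ (Fin J) → ℝ) (f' : EuclideanSpace ℝ (Fin J) → EuclideanSpace ℝ (Fin J))
    (C : Set (EuclideanSpace ℝ (Fin J))) (y : EuclideanSpace ℝ (Fin J)) :
    Set (EuclideanSpace ℝ (Fin J)) :=
  {c ∈ C | ∀ d ∈ C, bregman f f' d y ≤ bregman f f' c y}

/-! A differentiable convex function on an open subset of a finite-dimensional space has a
continuous gradient: the subgradient inequality bounds gradients locally, and every limit of
gradients `∇f(xₙ)` is a subgradient at `lim xₙ`, hence equal to the gradient there (a point where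
`f - ⟪a, · - x⟫` is minimal is critical). Then `D_f` is jointly continuous on `U × U`, so limits of
maximisers of `D_f(·, xₙ)` over `C` are maximisers of `D_f(·, x)`: the farthest-point map has a
closed graph. As all its values lie in the compact set `C`, it is compact-valued and upper
semicontinuous. -/

open Filter Topology InnerProductSpace

section ConvexGradient

variable {E : Type*} [NormedAddCommGroup E] [InnerProductSpace ℝ E] [CompleteSpace E]
  {f : E → ℝ} {U : Set E}

theorem ConvexOn.inner_le_sub_of_hasGradientAt (hf : ConvexOn ℝ U f) {g y z : E}
    (hy : y ∈ U) (hz : z ∈ U) (hg : HasGradientAt f g y) :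
    ⟪g, z - y⟫ ≤ f z - f y := by
  let L : ℝ →ᵃ[ℝ] E := AffineMap.lineMap y z
  have hderiv : HasDerivAt (f ∘ L) ⟪g, z - y⟫ 0 := by
    have hL : HasDerivAt L (z - y) 0 := AffineMap.hasDerivAt_lineMap
    have hg' : HasFDerivAt f (toDual ℝ E g) (L 0) := by simpa [L] using hg.hasFDerivAt
    simpa using hg'.comp_hasDerivAt 0 hL
  simpa [L, slope_def_field] using
    (hf.comp_affineMap L).le_slope_of_hasDerivAt (by simpa [L] using hy) (by simpa [L] using hz)
      zero_lt_one hderiv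

theorem HasGradientAt.eq_of_forall_add_inner_le {g a x : E} (hU : U ∈ 𝓝 x)
    (hg : HasGradientAt f g x) (ha : ∀ z ∈ U, f x + ⟪a, z - x⟫ ≤ f z) : a = g := by
  have hmin : IsLocalMin (fun z => f z - ⟪a, z - x⟫) x :=
    mem_of_superset hU fun z hz => show f x - ⟪a, x - x⟫ ≤ f z - ⟪a, z - x⟫ by
      rw [sub_self, inner_zero_right, sub_zero]; linarith [ha z hz]
  have hderiv : HasFDerivAt (fun z => f z - ⟪a, z - x⟫) (toDual ℝ E g - toDual ℝ E a) x := by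
    refine hg.hasFDerivAt.sub (((toDual ℝ E a).hasFDerivAt (x := x)).sub_const
      (toDual ℝ E a x) |>.congr_of_eventuallyEq (Eventually.of_forall fun z => ?_))
    simp [inner_sub_right]
  exact ((toDual ℝ E).injective (sub_eq_zero.1 (hmin.hasFDerivAt_eq_zero hderiv))).symm

theorem ConvexOn.mul_norm_le_of_hasGradientAt (hf : ConvexOn ℝ U f) {g y : E} {r M : ℝ}
    (hr : 0 ≤ r) (hball : Metric.closedBall y r ⊆ U) (hM : ∀ z ∈ Metric.closedBall y r, f z ≤ M)
    (hg : HasGradientAt f g y) : r * ‖g‖ ≤ M - f y := by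
  set u := (r / ‖g‖) • g
  have hinner : ⟪g, u⟫ = r * ‖g‖ := by
    rcases eq_or_ne g 0 with rfl | hg0
    · simp
    · rw [real_inner_smul_right, real_inner_self_eq_norm_sq]
      field_simp
  have hu : y + u ∈ Metric.closedBall y r := by
    rcases eq_or_ne g 0 with rfl | hg0
    · simpa [u] using hr
    · simp [u, norm_smul, abs_of_nonneg hr, hg0]
  calc r * ‖g‖ = ⟪g, y + u - y⟫ := by rw [add_sub_cancel_left, hinner]
    _ ≤ f (y + u) - f y :=
      hf.inner_le_sub_of_hasGradientAt (hball (Metric.mem_closedBall_self hr)) (hball hu) hg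
    _ ≤ M - f y := by linarith [hM _ hu]

variable [ProperSpace E] {f' : E → E}

theorem ConvexOn.exists_eventually_norm_gradient_le (hU : IsOpen U) (hf : ConvexOn ℝ U f)
    (hf' : ∀ y ∈ U, HasGradientAt f (f' y) y) {x : E} (hx : x ∈ U) :
    ∃ K, ∀ᶠ y in 𝓝 x, ‖f' y‖ ≤ K := by
  obtain ⟨ε, hε, hball⟩ := Metric.nhds_basis_closedBall.mem_iff.1 (hU.mem_nhds hx)
  obtain ⟨M, hM⟩ : BddAbove (f '' Metric.closedBall x ε) :=
    (isCompact_closedBall x ε).bddAbove_image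
      fun y hy => (hf' y (hball hy)).continuousAt.continuousWithinAt
  refine ⟨2 * (M - f x + 1) / ε, ?_⟩
  filter_upwards [Metric.closedBall_mem_nhds x (half_pos hε),
    (hf' x hx).continuousAt.eventually (eventually_gt_nhds (sub_one_lt (f x)))] with y hy hfy
  have hsub : Metric.closedBall y (ε / 2) ⊆ Metric.closedBall x ε :=
    Metric.closedBall_subset_closedBall' (by linarith [Metric.mem_closedBall.1 hy])
  have hyU : y ∈ U := hball (hsub (Metric.mem_closedBall_self (half_pos hε).le))
  have := hf.mul_norm_le_of_hasGradientAt (half_pos hε).le (hsub.trans hball)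
    (fun z hz => hM ⟨z, hsub hz, rfl⟩) (hf' y hyU)
  rw [le_div_iff₀ hε]
  linarith

theorem ConvexOn.continuousOn_gradient (hU : IsOpen U) (hf : ConvexOn ℝ U f)
    (hf' : ∀ y ∈ U, HasGradientAt f (f' y) y) : ContinuousOn f' U := by
  intro x hx
  refine ContinuousAt.continuousWithinAt (tendsto_nhds_iff_seq_tendsto.2 fun u hu => ?_)
  obtain ⟨K, hK⟩ := hf.exists_eventually_norm_gradient_le hU hf' hx
  refine (isCompact_closedBall (0 : E) K).tendsto_nhds_of_unique_mapClusterPt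
    ((hu.eventually hK).mono fun n hn => mem_closedBall_zero_iff.2 hn) fun a _ ha => ?_
  obtain ⟨φ, hφ, hlim⟩ := ha.tendsto_subseq
  have huφ : Tendsto (u ∘ φ) atTop (𝓝 x) := hu.comp hφ.tendsto_atTop
  refine (hf' x hx).eq_of_forall_add_inner_le (hU.mem_nhds hx) fun z hz => le_of_tendsto
    (((hf' x hx).continuousAt.tendsto.comp huφ).add (hlim.inner (tendsto_const_nhds.sub huφ))) ?_
  filter_upwards [huφ.eventually (hU.mem_nhds hx)] with n hn
  simp only [Function.comp_apply] at hn ⊢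
  linarith [hf.inner_le_sub_of_hasGradientAt hn hz (hf' _ hn)]

end ConvexGradient

section Farthest

variable {J : ℕ} {f : EuclideanSpace ℝ (Fin J) → ℝ}
  {f' : EuclideanSpace ℝ (Fin J) → EuclideanSpace ℝ (Fin J)} {U C : Set (EuclideanSpace ℝ (Fin J))}

theorem Filter.Tendsto.bregman {ι : Type*} {l : Filter ι} {d xs : ι → EuclideanSpace ℝ (Fin J)}
    {d₀ x : EuclideanSpace ℝ (Fin J)} (hd : Tendsto d l (𝓝 d₀)) (hxs : Tendsto xs l (𝓝 x))
    (hfd : ContinuousAt f d₀) (hfx : ContinuousAt f x) (hf'x : ContinuousAt f' x) :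
    Tendsto (fun i => bregman f f' (d i) (xs i)) l (𝓝 (bregman f f' d₀ x)) :=
  ((hfd.tendsto.comp hd).sub (hfx.tendsto.comp hxs)).sub
    ((hf'x.tendsto.comp hxs).inner (hd.sub hxs))

theorem mem_farthestSet_of_tendsto {ι : Type*} {l : Filter ι} [l.NeBot] (hU : IsOpen U)
    (hf : ContinuousOn f U) (hf' : ContinuousOn f' U) (hC : IsClosed C) (hCU : C ⊆ U)
    {xs cs : ι → EuclideanSpace ℝ (Fin J)} {x c : EuclideanSpace ℝ (Fin J)} (hx : x ∈ U)
    (hxs : Tendsto xs l (𝓝 x)) (hcs : ∀ᶠ i in l, cs i ∈ farthestSet f f' C (xs i))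
    (hc : Tendsto cs l (𝓝 c)) : c ∈ farthestSet f f' C x := by
  have hcC : c ∈ C := hC.mem_of_tendsto hc (hcs.mono fun _ h => h.1)
  have hcont : ∀ y ∈ U, ContinuousAt f y := fun y hy => hf.continuousAt (hU.mem_nhds hy)
  have hf'x : ContinuousAt f' x := hf'.continuousAt (hU.mem_nhds hx)
  refine ⟨hcC, fun d hd => le_of_tendsto_of_tendsto
    (tendsto_const_nhds.bregman hxs (hcont d (hCU hd)) (hcont x hx) hf'x)
    (hc.bregman hxs (hcont c (hCU hcC)) (hcont x hx) hf'x) (hcs.mono fun _ h => h.2 d hd)⟩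

theorem isCompact_farthestSet (hU : IsOpen U) (hf : ContinuousOn f U) (hf' : ContinuousOn f' U)
    (hC : IsCompact C) (hCU : C ⊆ U) {y : EuclideanSpace ℝ (Fin J)} (hy : y ∈ U) :
    IsCompact (farthestSet f f' C y) :=
  hC.of_isClosed_subset (IsSeqClosed.isClosed fun _ _ hcs hc =>
      mem_farthestSet_of_tendsto hU hf hf' hC.isClosed hCU hy tendsto_const_nhds
        (.of_forall hcs) hc)
    (Set.sep_subset _ _)

theorem upperHemicontinuousAt_farthestSet (hU : IsOpen U) (hf : ContinuousOn f U)
    (hf' : ContinuousOn f' U) (hC : IsCompact C) (hCU : C ⊆ U) {y : EuclideanSpace ℝ (Fin J)}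
    (hy : y ∈ U) : UpperHemicontinuousAt (farthestSet f f' C) y :=
  .of_sequences hC.isSeqCompact (.of_forall fun _ => Set.sep_subset _ _)
    fun _ hxs _ hcs _ hc =>
      mem_farthestSet_of_tendsto hU hf hf' hC.isClosed hCU hy hxs (.of_forall hcs) hc

end Farthest

theorem farthest_point_map_closed_graph_and_usc_general {J : ℕ}
    (f : EuclideanSpace ℝ (Fin J) → ℝ) (U : Set (EuclideanSpace ℝ (Fin J)))
    (hU : IsOpen U)
    (hconv : StrictConvexOn ℝ U f)
    (f' : EuclideanSpace ℝ (Fin J) → EuclideanSpace ℝ (Fin J))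
    (hf' : ∀ y ∈ U, HasGradientAt f (f' y) y)
    (C : Set (EuclideanSpace ℝ (Fin J)))
    (hCcp : IsCompact C) (hCU : C ⊆ U) :
    (∀ (x : EuclideanSpace ℝ (Fin J)) (xn cn : ℕ → EuclideanSpace ℝ (Fin J))
        (cbar : EuclideanSpace ℝ (Fin J)), x ∈ U → (∀ n, xn n ∈ U) →
        Filter.Tendsto xn Filter.atTop (nhds x) →
        (∀ n, cn n ∈ farthestSet f f' C (xn n)) →
        Filter.Tendsto cn Filter.atTop (nhds cbar) →
        cbar ∈ farthestSet f f' C x) ∧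
      (∀ y ∈ U, IsCompact (farthestSet f f' C y)) ∧
      (∀ y ∈ U, ∀ V : Set (EuclideanSpace ℝ (Fin J)), IsOpen V →
        farthestSet f f' C y ⊆ V →
        ∃ δ > 0, ∀ z ∈ Metric.ball y δ ∩ U, farthestSet f f' C z ⊆ V) := by
  have hfc : ContinuousOn f U := fun y hy => (hf' y hy).continuousAt.continuousWithinAt
  have hf'c : ContinuousOn f' U := hconv.convexOn.continuousOn_gradient hU hf'
  refine ⟨fun x xn cn cbar hx _ hxn hcn hcbar =>
      mem_farthestSet_of_tendsto hU hfc hf'c hCcp.isClosed hCU hx hxn (.of_forall hcn) hcbar,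
    fun y hy => isCompact_farthestSet hU hfc hf'c hCcp hCU hy, fun y hy V hV hyV => ?_⟩
  obtain ⟨δ, hδ, hball⟩ := Metric.eventually_nhds_iff_ball.1
    ((upperHemicontinuousAt_farthestSet hU hfc hf'c hCcp hCU hy).forall_isOpen V hV hyV)
  exact ⟨δ, hδ, fun z hz => hball z hz.1⟩

/-- Cluster points of farthest points of a convergent sequence are farthest points of the
limit; consequently `Q_C` is compact-valued and upper semicontinuous on `U`. -/
theorem farthest_point_map_closed_graph_and_usc {J : ℕ}
    (f : EuclideanSpace ℝ (Fin J) → ℝ) (U : Set (EuclideanSpace ℝ (Fin J)))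
    (hU : IsOpen U) (hUne : U.Nonempty)
    (hconv : StrictConvexOn ℝ U f)
    (f' : EuclideanSpace ℝ (Fin J) → EuclideanSpace ℝ (Fin J))
    (hf' : ∀ y ∈ U, HasGradientAt f (f' y) y)
    (hcoer : Filter.Tendsto (fun x : EuclideanSpace ℝ (Fin J) => f x / ‖x‖)
      (Filter.comap norm Filter.atTop) Filter.atTop)
    (C : Set (EuclideanSpace ℝ (Fin J))) (hCne : C.Nonempty)
    (hCcp : IsCompact C) (hCU : C ⊆ U) :
    (∀ (x : EuclideanSpace ℝ (Fin J)) (xn cn : ℕ → EuclideanSpace ℝ (Fin J))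
        (cbar : EuclideanSpace ℝ (Fin J)), x ∈ U → (∀ n, xn n ∈ U) →
        Filter.Tendsto xn Filter.atTop (nhds x) →
        (∀ n, cn n ∈ farthestSet f f' C (xn n)) →
        Filter.Tendsto cn Filter.atTop (nhds cbar) →
        cbar ∈ farthestSet f f' C x) ∧
      (∀ y ∈ U, IsCompact (farthestSet f f' C y)) ∧
      (∀ y ∈ U, ∀ V : Set (EuclideanSpace ℝ (Fin J)), IsOpen V →
        farthestSet f f' C y ⊆ V →
        ∃ δ > 0, ∀ z ∈ Metric.ball y δ ∩ U, farthestSet f f' C z ⊆ V) :=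
  farthest_point_map_closed_graph_and_usc_general f U hU hconv f' hf' C hCcp hCU
end

section
/- For all x, y ∈ U, all farthest points p of x and q of y in C satisfy ⟨q − p, ∇f(x) − ∇f(y)⟩ ≥ 0; consequently the operator x* ↦ −Q_C(∇f*(x*)) is monotone on ℝ^J. -/
open scoped RealInnerProductSpace

/-
Adding the two defining inequalities `D(q,x) ≤ D(p,x)` and `D(p,y) ≤ D(q,y)` of the farthest
points `p ∈ Q_C(x)`, `q ∈ Q_C(y)` cancels every value of `f`, since
`D(q,z) - D(p,z) = f q - f p - ⟪∇f(z), q - p⟫`; what remains is `0 ≤ ⟪q - p, ∇f(x) - ∇f(y)⟫`.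
Taking `x = ∇f*(a)`, `y = ∇f*(b)` gives monotonicity of `a ↦ -Q_C(∇f*(a))`.
-/

theorem bregman_sub_bregman {J : ℕ}
    (f : EuclideanSpace ℝ (Fin J) → ℝ) (f' : EuclideanSpace ℝ (Fin J) → EuclideanSpace ℝ (Fin J))
    (p q z : EuclideanSpace ℝ (Fin J)) :
    bregman f f' q z - bregman f f' p z = f q - f p - ⟪f' z, q - p⟫ := by
  simp only [bregman, inner_sub_right]
  ring

theorem inner_sub_gradient_nonneg_of_mem_farthestSet {J : ℕ}
    {f : EuclideanSpace ℝ (Fin J) → ℝ} {f' : EuclideanSpace ℝ (Fin J) → EuclideanSpace ℝ (Fin J)}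
    {C : Set (EuclideanSpace ℝ (Fin J))} {x y p q : EuclideanSpace ℝ (Fin J)}
    (hp : p ∈ farthestSet f f' C x) (hq : q ∈ farthestSet f f' C y) :
    0 ≤ ⟪q - p, f' x - f' y⟫ := by
  have hx : bregman f f' q x - bregman f f' p x ≤ 0 := sub_nonpos.mpr (hp.2 q hq.1)
  have hy : 0 ≤ bregman f f' q y - bregman f f' p y := sub_nonneg.mpr (hq.2 p hp.1)
  rw [bregman_sub_bregman] at hx hy
  rw [real_inner_comm, inner_sub_left]
  linarith

theorem farthest_point_map_monotone_general {J : ℕ}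
    (f : EuclideanSpace ℝ (Fin J) → ℝ) (U : Set (EuclideanSpace ℝ (Fin J)))
    (f' : EuclideanSpace ℝ (Fin J) → EuclideanSpace ℝ (Fin J))
    (g : EuclideanSpace ℝ (Fin J) → EuclideanSpace ℝ (Fin J))
    (hgr : ∀ s, f' (g s) = s)
    (C : Set (EuclideanSpace ℝ (Fin J))) :
    (∀ x ∈ U, ∀ y ∈ U, ∀ p ∈ farthestSet f f' C x, ∀ q ∈ farthestSet f f' C y,
        0 ≤ ⟪q - p, f' x - f' y⟫) ∧
      (∀ a b : EuclideanSpace ℝ (Fin J), ∀ u ∈ farthestSet f f' C (g a),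
        ∀ v ∈ farthestSet f f' C (g b), 0 ≤ ⟪(-u) - (-v), a - b⟫) := by
  refine ⟨fun x _ y _ p hp q hq => inner_sub_gradient_nonneg_of_mem_farthestSet hp hq,
    fun a b u hu v hv => ?_⟩
  have h := inner_sub_gradient_nonneg_of_mem_farthestSet hu hv
  rwa [hgr a, hgr b, ← neg_sub_neg] at h

/-- Farthest points satisfy `⟪q − p, ∇f(x) − ∇f(y)⟫ ≥ 0`, hence
`x* ⇉ −Q_C(∇f*(x*))` is monotone on `ℝ^J`. -/
theorem farthest_point_map_monotone {J : ℕ}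
    (f : EuclideanSpace ℝ (Fin J) → ℝ) (U : Set (EuclideanSpace ℝ (Fin J)))
    (hU : IsOpen U) (hUne : U.Nonempty)
    (hconv : StrictConvexOn ℝ U f)
    (f' : EuclideanSpace ℝ (Fin J) → EuclideanSpace ℝ (Fin J))
    (hf' : ∀ y ∈ U, HasGradientAt f (f' y) y)
    (hcoer : Filter.Tendsto (fun x : EuclideanSpace ℝ (Fin J) => f x / ‖x‖)
      (Filter.comap norm Filter.atTop) Filter.atTop)
    (g : EuclideanSpace ℝ (Fin J) → EuclideanSpace ℝ (Fin J))
    (hgU : ∀ s, g s ∈ U) (hgr : ∀ s, f' (g s) = s) (hgl : ∀ y ∈ U, g (f' y) = y)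
    (hgcont : Continuous g)
    (C : Set (EuclideanSpace ℝ (Fin J))) (hCne : C.Nonempty)
    (hCcp : IsCompact C) (hCU : C ⊆ U) :
    (∀ x ∈ U, ∀ y ∈ U, ∀ p ∈ farthestSet f f' C x, ∀ q ∈ farthestSet f f' C y,
        0 ≤ ⟪q - p, f' x - f' y⟫) ∧
      (∀ a b : EuclideanSpace ℝ (Fin J), ∀ u ∈ farthestSet f f' C (g a),
        ∀ v ∈ farthestSet f f' C (g b), 0 ≤ ⟪(-u) - (-v), a - b⟫) :=
  farthest_point_map_monotone_general f U f' g hgr C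
end

section
/- If every point y ∈ U has a unique farthest point in C w.r.t. D_f (C is D_f-Klee), then the single-valued farthest-point map Q_C : U → C is continuous, and the map x* ↦ −Q_C(∇f*(x*)) is continuous and maximal monotone on ℝ^J. -/
/-! For `y = ∇f*(s)` one has `D_f(c, y) = (f c - ⟪s, c⟫) - (f y - ⟪s, y⟫)`, so `Q_C(∇f*(s))` is
the unique maximizer over the compact set `C` of `c ↦ f c - ⟪s, c⟫`. Uniqueness plus compactness
make this maximizer continuous in `s`; adding the maximality inequalities at `s = a` and `s = b`
gives monotonicity of its negative, and a continuous operator is maximal among monotone ones by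
Minty's trick. Finally `Q_C = (Q_C ∘ ∇f*) ∘ ∇f` on `U`, and `∇f` is continuous there: it is
locally bounded by convexity and its limit points are pinned down by the continuous inverse `∇f*`.
-/

open scoped RealInnerProductSpace

open Filter Function Metric Topology

theorem continuousAt_of_leftInverse_of_eventually_mem_compact {X Y : Type*}
    [TopologicalSpace X] [T2Space X] [TopologicalSpace Y] {g : Y → X} {h : X → Y} {K : Set Y}
    {x₀ : X} (hg : Continuous g) (hhg : LeftInverse h g) (hgh : ∀ᶠ x in 𝓝 x₀, g (h x) = x)
    (hK : IsCompact K) (hhK : ∀ᶠ x in 𝓝 x₀, h x ∈ K) : ContinuousAt h x₀ := by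
  refine hK.tendsto_nhds_of_unique_mapClusterPt hhK fun y _ hy => ?_
  have := neBot_inf_comap_iff_map'.2 hy
  have hgy : Tendsto (g ∘ h) (comap h (𝓝 y) ⊓ 𝓝 x₀) (𝓝 (g y)) :=
    (hg.tendsto y).comp (tendsto_comap.mono_left inf_le_left)
  have hx₀ : Tendsto (g ∘ h) (comap h (𝓝 y) ⊓ 𝓝 x₀) (𝓝 x₀) :=
    (tendsto_id.mono_left inf_le_right).congr' ((hgh.filter_mono inf_le_right).mono
      fun x hx => hx.symm)
  rw [← hhg y, tendsto_nhds_unique hgy hx₀]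

section Convex

variable {E : Type*} [NormedAddCommGroup E] [NormedSpace ℝ E] {U : Set E} {f : E → ℝ}

theorem ConvexOn.le_sub_of_hasFDerivAt_s10 {f'y : E →L[ℝ] ℝ} {y z : E} (hf : ConvexOn ℝ U f)
    (hy : y ∈ U) (hz : z ∈ U) (hfy : HasFDerivAt f f'y y) : f'y (z - y) ≤ f z - f y := by
  have hline : HasDerivAt (f ∘ AffineMap.lineMap (k := ℝ) y z) (f'y (z - y)) 0 :=
    (by simpa using hfy : HasFDerivAt f f'y (AffineMap.lineMap (k := ℝ) y z 0)).comp_hasDerivAt 0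
      AffineMap.hasDerivAt_lineMap
  simpa [slope_def_field] using
    (hf.comp_affineMap _).le_slope_of_hasDerivAt (by simpa) (by simpa) zero_lt_one hline

theorem ConvexOn.exists_eventually_norm_fderiv_le {f' : E → E →L[ℝ] ℝ} (hU : IsOpen U)
    (hf : ConvexOn ℝ U f) (hf' : ∀ y ∈ U, HasFDerivAt f (f' y) y) {y₀ : E} (hy₀ : y₀ ∈ U) :
    ∃ R, ∀ᶠ y in 𝓝 y₀, ‖f' y‖ ≤ R := by
  obtain ⟨ε, hε, hball⟩ := eventually_nhds_iff_ball.1 <| (hU.eventually_mem hy₀).and <|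
    tendsto_nhds.1 (hf' y₀ hy₀).continuousAt 1 one_pos
  have hr : 0 < ε / 2 := half_pos hε
  refine ⟨2 / (ε / 2), ?_⟩
  filter_upwards [ball_mem_nhds y₀ hr] with y hy
  -- the gradient inequality bounds `f' y` by the oscillation of `f` on `ball y₀ ε`
  have hdir : ∀ d ∈ closedBall (0 : E) (ε / 2), f' y d ≤ 2 := fun d hd => by
    have hyε : y ∈ ball y₀ ε := ball_subset_ball (half_le_self hε.le) hy
    have hydε : y + d ∈ ball y₀ ε := by
      rw [mem_ball, dist_eq_norm, add_sub_right_comm]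
      rw [mem_ball, dist_eq_norm] at hy
      rw [mem_closedBall, dist_zero_right] at hd
      linarith [norm_add_le (y - y₀) d]
    have hgrad := hf.le_sub_of_hasFDerivAt_s10 (hball y hyε).1 (hball _ hydε).1 (hf' y (hball y hyε).1)
    rw [add_sub_cancel_left] at hgrad
    have h₁ := (hball _ hydε).2
    have h₂ := (hball y hyε).2
    rw [Real.dist_eq, abs_lt] at h₁ h₂
    linarith
  refine ContinuousLinearMap.opNorm_bound_of_ball_bound hr 2 (f' y) fun d hd => ?_
  have hneg := hdir (-d) (by simpa using hd)
  rw [map_neg] at hneg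
  exact abs_le.2 ⟨by linarith, hdir d hd⟩

end Convex

theorem ConvexOn.continuousOn_gradient_of_leftInverse {E : Type*} [NormedAddCommGroup E]
    [InnerProductSpace ℝ E] [FiniteDimensional ℝ E] {U : Set E} {f : E → ℝ} {f' g : E → E}
    (hU : IsOpen U) (hf : ConvexOn ℝ U f) (hf' : ∀ y ∈ U, HasGradientAt f (f' y) y)
    (hg : Continuous g) (hf'g : LeftInverse f' g) (hgf' : ∀ y ∈ U, g (f' y) = y) :
    ContinuousOn f' U := by
  intro y₀ hy₀
  obtain ⟨R, hR⟩ :=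
    hf.exists_eventually_norm_fderiv_le hU (fun y hy => (hf' y hy).hasFDerivAt) hy₀
  refine (continuousAt_of_leftInverse_of_eventually_mem_compact hg hf'g
    (eventually_of_mem (hU.mem_nhds hy₀) hgf') (isCompact_closedBall 0 R) ?_).continuousWithinAt
  filter_upwards [hR] with y hy
  rwa [mem_closedBall_zero_iff, ← (InnerProductSpace.toDual ℝ E).norm_map]

section MaximizerOfSubInner

variable {E : Type*} [NormedAddCommGroup E] [InnerProductSpace ℝ E] {F : E → ℝ} {K : Set E}

theorem continuous_of_isMaxOn_sub_inner {m : E → E} (hK : IsCompact K) (hF : ContinuousOn F K)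
    (hmK : ∀ s, m s ∈ K) (hmax : ∀ s, IsMaxOn (fun c => F c - ⟪s, c⟫) K (m s))
    (huniq : ∀ s, ∀ x ∈ K, IsMaxOn (fun c => F c - ⟪s, c⟫) K x → x = m s) : Continuous m := by
  refine continuous_iff_continuousAt.2 fun s₀ => hK.tendsto_nhds_of_unique_mapClusterPt
    (Eventually.of_forall hmK) fun x hxK hx => huniq s₀ x hxK (isMaxOn_iff.2 fun c hc => ?_)
  have := neBot_inf_comap_iff_map'.2 hx
  have hs : Tendsto id (comap m (𝓝 x) ⊓ 𝓝 s₀) (𝓝 s₀) := tendsto_id.mono_left inf_le_right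
  have hm : Tendsto m (comap m (𝓝 x) ⊓ 𝓝 s₀) (𝓝[K] x) :=
    tendsto_nhdsWithin_iff.2 ⟨tendsto_comap.mono_left inf_le_left, Eventually.of_forall hmK⟩
  exact le_of_tendsto_of_tendsto' (tendsto_const_nhds.sub (hs.inner tendsto_const_nhds))
    (((hF x hxK).tendsto.comp hm).sub (hs.inner (hm.mono_right nhdsWithin_le_nhds)))
    fun s => isMaxOn_iff.1 (hmax s) c hc

theorem inner_sub_nonneg_of_isMaxOn_sub_inner {a b x y : E} (hx : x ∈ K) (hy : y ∈ K)
    (ha : IsMaxOn (fun c => F c - ⟪a, c⟫) K x) (hb : IsMaxOn (fun c => F c - ⟪b, c⟫) K y) :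
    0 ≤ ⟪y - x, a - b⟫ := by
  have hax := isMaxOn_iff.1 ha y hy
  have hby := isMaxOn_iff.1 hb x hx
  rw [inner_sub_left, inner_sub_right, inner_sub_right, real_inner_comm a y,
    real_inner_comm b y, real_inner_comm a x, real_inner_comm b x]
  linarith

end MaximizerOfSubInner

theorem eq_of_forall_inner_sub_nonneg {E : Type*} [NormedAddCommGroup E] [InnerProductSpace ℝ E]
    {T : E → E} {a u : E} (hT : ContinuousAt T a) (h : ∀ b, 0 ≤ ⟪u - T b, a - b⟫) :
    u = T a := by
  set d := u - T a
  -- test the inequality at `b = a + t • d` and let `t ↓ 0`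
  have hray : Tendsto (fun t : ℝ => a + t • d) (𝓝 0) (𝓝 a) := by
    simpa using tendsto_const_nhds.add ((tendsto_id (x := 𝓝 (0 : ℝ))).smul_const d)
  have hlim : Tendsto (fun t : ℝ => ⟪u - T (a + t • d), d⟫) (𝓝[>] 0) (𝓝 ⟪d, d⟫) :=
    ((tendsto_const_nhds.sub (hT.tendsto.comp hray)).inner tendsto_const_nhds).mono_left
      nhdsWithin_le_nhds
  have hnonpos : ∀ t : ℝ, 0 < t → ⟪u - T (a + t • d), d⟫ ≤ 0 := fun t ht => by
    have := h (a + t • d)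
    rw [sub_add_cancel_left, inner_neg_right, real_inner_smul_right] at this
    nlinarith
  have hdd : ⟪d, d⟫ ≤ 0 := le_of_tendsto hlim (eventually_nhdsWithin_of_forall hnonpos)
  exact sub_eq_zero.1 (real_inner_self_nonpos.1 hdd)

theorem isMaxOn_bregman_iff {J : ℕ} {f : EuclideanSpace ℝ (Fin J) → ℝ}
    {f' : EuclideanSpace ℝ (Fin J) → EuclideanSpace ℝ (Fin J)} {K : Set (EuclideanSpace ℝ (Fin J))}
    {x y : EuclideanSpace ℝ (Fin J)} :
    IsMaxOn (fun c => bregman f f' c y) K x ↔ IsMaxOn (fun c => f c - ⟪f' y, c⟫) K x := by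
  simp only [isMaxOn_iff, bregman, inner_sub_right]
  exact forall₂_congr fun c _ => by constructor <;> intro h <;> linarith

theorem klee_farthest_map_continuous_maximal_monotone_general {J : ℕ}
    (f : EuclideanSpace ℝ (Fin J) → ℝ) (U : Set (EuclideanSpace ℝ (Fin J)))
    (hU : IsOpen U)
    (hconv : StrictConvexOn ℝ U f)
    (f' : EuclideanSpace ℝ (Fin J) → EuclideanSpace ℝ (Fin J))
    (hf' : ∀ y ∈ U, HasGradientAt f (f' y) y)
    (g : EuclideanSpace ℝ (Fin J) → EuclideanSpace ℝ (Fin J))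
    (hgU : ∀ s, g s ∈ U) (hgr : ∀ s, f' (g s) = s) (hgl : ∀ y ∈ U, g (f' y) = y)
    (hgcont : Continuous g)
    (C : Set (EuclideanSpace ℝ (Fin J)))
    (hCcp : IsCompact C) (hCU : C ⊆ U)
    -- `C` is `D_f`-Klee with single-valued farthest-point map `Q`
    (Q : EuclideanSpace ℝ (Fin J) → EuclideanSpace ℝ (Fin J))
    (hQ : ∀ y ∈ U, Q y ∈ C ∧ ∀ c ∈ C, bregman f f' c y ≤ bregman f f' (Q y) y)
    (hKlee : ∀ y ∈ U, ∀ x ∈ C, (∀ c ∈ C, bregman f f' c y ≤ bregman f f' x y) → x = Q y) :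
    ContinuousOn Q U ∧ Continuous (fun s => -Q (g s)) ∧
      (∀ a b : EuclideanSpace ℝ (Fin J), 0 ≤ ⟪(-Q (g a)) - (-Q (g b)), a - b⟫) ∧
      (∀ (a u : EuclideanSpace ℝ (Fin J)),
        (∀ b : EuclideanSpace ℝ (Fin J), 0 ≤ ⟪u - (-Q (g b)), a - b⟫) → u = -Q (g a)) := by
  -- through `y = g s`, farthest points for `D_f` are maximizers of `c ↦ f c - ⟪s, c⟫`
  have hQC : ∀ s, Q (g s) ∈ C := fun s => (hQ _ (hgU s)).1
  have hmax : ∀ s, IsMaxOn (fun c => f c - ⟪s, c⟫) C (Q (g s)) := fun s => by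
    simpa only [hgr] using isMaxOn_bregman_iff.1 (isMaxOn_iff.2 (hQ _ (hgU s)).2)
  have huniq : ∀ s, ∀ x ∈ C, IsMaxOn (fun c => f c - ⟪s, c⟫) C x → x = Q (g s) :=
    fun s x hx hxmax => hKlee _ (hgU s) x hx <| isMaxOn_iff.1 <|
      isMaxOn_bregman_iff.2 (by simpa only [hgr] using hxmax)
  have hfC : ContinuousOn f C := fun c hc => (hf' c (hCU hc)).continuousAt.continuousWithinAt
  have hQg : Continuous (fun s => Q (g s)) :=
    continuous_of_isMaxOn_sub_inner hCcp hfC hQC hmax huniq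
  have hf'U : ContinuousOn f' U :=
    hconv.convexOn.continuousOn_gradient_of_leftInverse hU hf' hgcont hgr hgl
  refine ⟨(hQg.comp_continuousOn hf'U).congr fun y hy => congrArg Q (hgl y hy).symm, hQg.neg,
    fun a b => ?_, fun a u hu => eq_of_forall_inner_sub_nonneg (T := fun s => -Q (g s))
      hQg.neg.continuousAt hu⟩
  rw [neg_sub_neg]
  exact inner_sub_nonneg_of_isMaxOn_sub_inner (hQC a) (hQC b) (hmax a) (hmax b)

/-- If `C` is `D_f`-Klee, the single-valued farthest-point map `Q_C : U → C` is
continuous, and `x* ↦ −Q_C(∇f*(x*))` is continuous and maximal monotone on `ℝ^J`. -/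
theorem klee_farthest_map_continuous_maximal_monotone {J : ℕ}
    (f : EuclideanSpace ℝ (Fin J) → ℝ) (U : Set (EuclideanSpace ℝ (Fin J)))
    (hU : IsOpen U) (hUne : U.Nonempty)
    (hconv : StrictConvexOn ℝ U f)
    (f' : EuclideanSpace ℝ (Fin J) → EuclideanSpace ℝ (Fin J))
    (hf' : ∀ y ∈ U, HasGradientAt f (f' y) y)
    (hcoer : Filter.Tendsto (fun x : EuclideanSpace ℝ (Fin J) => f x / ‖x‖)
      (Filter.comap norm Filter.atTop) Filter.atTop)
    (g : EuclideanSpace ℝ (Fin J) → EuclideanSpace ℝ (Fin J))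
    (hgU : ∀ s, g s ∈ U) (hgr : ∀ s, f' (g s) = s) (hgl : ∀ y ∈ U, g (f' y) = y)
    (hgcont : Continuous g)
    (C : Set (EuclideanSpace ℝ (Fin J))) (hCne : C.Nonempty)
    (hCcp : IsCompact C) (hCU : C ⊆ U)
    -- `C` is `D_f`-Klee with single-valued farthest-point map `Q`
    (Q : EuclideanSpace ℝ (Fin J) → EuclideanSpace ℝ (Fin J))
    (hQ : ∀ y ∈ U, Q y ∈ C ∧ ∀ c ∈ C, bregman f f' c y ≤ bregman f f' (Q y) y)
    (hKlee : ∀ y ∈ U, ∀ x ∈ C, (∀ c ∈ C, bregman f f' c y ≤ bregman f f' x y) → x = Q y) :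
    ContinuousOn Q U ∧ Continuous (fun s => -Q (g s)) ∧
      (∀ a b : EuclideanSpace ℝ (Fin J), 0 ≤ ⟪(-Q (g a)) - (-Q (g b)), a - b⟫) ∧
      (∀ (a u : EuclideanSpace ℝ (Fin J)),
        (∀ b : EuclideanSpace ℝ (Fin J), 0 ≤ ⟪u - (-Q (g b)), a - b⟫) → u = -Q (g a)) :=
  klee_farthest_map_continuous_maximal_monotone_general f U hU hconv f' hf' g hgU hgr hgl hgcont C
    hCcp hCU Q hQ hKlee
end

section
/- Suppose f is additionally twice continuously differentiable on U. For every y ∈ U and direction w, the Dini subderivative of the farthest-distance function g := sup_{c∈C} D_f(c,·) at y in direction w equals max_{x ∈ Q_C(y)} ⟨∇²f(y)(y − x), w⟩, and g is Clarke regular at y with Clarke subdifferential ∇²f(y)[y − conv Q_C(y)]. -/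
/-!
This is Danskin's theorem for `g z = max_{c ∈ C} φ z c` with `φ z c = D_f(c, z)`, whose
gradient in `z` is `∇²f(z)(z - c)` (by symmetry of the Hessian) and depends jointly
continuously on `(z, c)`. Comparing `g` with `φ(·, c)` for a maximizer `c` at `y` bounds the
Dini quotients from below by `⟨∇²f(y)(y - c), w⟩`. Conversely, for `(x, t)` near `(y, 0)`, a
maximizer at `x + t w` lies close to `Q_C(y)` (the argmax is upper semicontinuous) and the
quotients of all `φ(·, c)` are uniformly close to `⟨∇²f(y)(y - c), w⟩`, which bounds the Clarke
quotients from above. So both subderivatives equal the support function of the compact set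
`∇²f(y)(y - Q_C(y))`, and the Clarke subdifferential is its convex hull, which is closed by
Carathéodory's theorem.
-/

open scoped RealInnerProductSpace

/-- Dini subderivative of `g` at `y` in direction `w`. -/
noncomputable def diniDeriv {J : ℕ} (g : EuclideanSpace ℝ (Fin J) → ℝ)
    (y w : EuclideanSpace ℝ (Fin J)) : ℝ :=
  Filter.liminf (fun t : ℝ => (g (y + t • w) - g y) / t) (nhdsWithin 0 (Set.Ioi 0))

/-- Clarke subderivative of `g` at `y` in direction `w`. -/
noncomputable def clarkeDeriv {J : ℕ} (g : EuclideanSpace ℝ (Fin J) → ℝ)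
    (y w : EuclideanSpace ℝ (Fin J)) : ℝ :=
  Filter.limsup (fun p : EuclideanSpace ℝ (Fin J) × ℝ => (g (p.1 + p.2 • w) - g p.1) / p.2)
    ((nhds y) ×ˢ (nhdsWithin 0 (Set.Ioi 0)))

open Filter Function Metric Set Topology

section ConvexHull

variable {E : Type*} [NormedAddCommGroup E]

theorem isCompact_convexHull [NormedSpace ℝ E] [FiniteDimensional ℝ E] {K : Set E}
    (hK : IsCompact K) : IsCompact (convexHull ℝ K) := by
  rcases K.eq_empty_or_nonempty with rfl | ⟨k₀, hk₀⟩
  · simp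
  set n := Module.finrank ℝ E + 1
  suffices convexHull ℝ K =
      (fun p : (Fin n → ℝ) × (Fin n → E) => ∑ i, p.1 i • p.2 i) ''
        (stdSimplex ℝ (Fin n) ×ˢ univ.pi fun _ => K) by
    rw [this]
    exact ((isCompact_stdSimplex ℝ _).prod (isCompact_univ_pi fun _ => hK)).image (by fun_prop)
  refine Subset.antisymm (fun x hx => ?_) ?_
  · -- Carathéodory: at most `n` points suffice; pad the combination with zero weights on `k₀`.
    obtain ⟨ι, _, z, w, hzK, hz, hw0, hw1, rfl⟩ := eq_pos_convex_span_of_mem_convexHull hx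
    obtain ⟨e⟩ : Nonempty (ι ↪ Fin n) := Function.Embedding.nonempty_of_card_le <| by
      simpa [n] using hz.card_le_finrank_succ.trans (Nat.succ_le_succ (Submodule.finrank_le _))
    refine ⟨(extend e w 0, extend e z fun _ => k₀),
      ⟨⟨fun j => ?_, ?_⟩, fun j _ => ?_⟩, ?_⟩
    · rcases em (∃ i, e i = j) with ⟨i, rfl⟩ | hj
      · simpa [e.injective.extend_apply] using (hw0 i).le
      · simp [extend_apply' _ _ _ hj]
    · rw [← hw1]
      exact (Fintype.sum_of_injective e e.injective w (extend e w 0)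
        (fun j hj => extend_apply' _ _ _ hj)
        fun i => (e.injective.extend_apply _ _ _).symm).symm
    · rcases em (∃ i, e i = j) with ⟨i, rfl⟩ | hj
      · simpa [e.injective.extend_apply] using hzK (mem_range_self i)
      · simpa [extend_apply' _ _ _ hj] using hk₀
    · exact (Fintype.sum_of_injective e e.injective _ _
        (fun j hj => by simp [extend_apply' _ _ _ hj])
        fun i => by simp [e.injective.extend_apply]).symm
  · rintro _ ⟨⟨w, z⟩, ⟨⟨hw0, hw1⟩, hz⟩, rfl⟩
    exact (convex_convexHull ℝ K).sum_mem (fun i _ => hw0 i) hw1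
      fun i _ => subset_convexHull ℝ K (hz i (mem_univ i))

theorem setOf_forall_inner_le_sSup_eq_convexHull [InnerProductSpace ℝ E]
    [FiniteDimensional ℝ E] {K : Set E} (hK : IsCompact K) (hne : K.Nonempty) :
    {s | ∀ w, ⟪s, w⟫ ≤ sSup ((⟪·, w⟫) '' K)} = convexHull ℝ K := by
  have hbdd (w : E) : BddAbove ((⟪·, w⟫) '' K) :=
    (hK.image (continuous_id.inner continuous_const)).bddAbove
  refine Subset.antisymm (fun s hs => ?_)
    (convexHull_min (fun k hk w => le_csSup (hbdd w) ⟨k, hk, rfl⟩) ?_)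
  · by_contra hs'
    obtain ⟨l, u, hlK, hls⟩ := geometric_hahn_banach_closed_point (convex_convexHull ℝ K)
      (isCompact_convexHull hK).isClosed hs'
    set w := (InnerProductSpace.toDual ℝ E).symm l
    have hl (x : E) : l x = ⟪x, w⟫ := by
      rw [real_inner_comm, InnerProductSpace.toDual_symm_apply]
    have : sSup ((⟪·, w⟫) '' K) ≤ u := csSup_le (hne.image _) <| by
      rintro _ ⟨k, hk, rfl⟩
      exact (hl k ▸ hlK k (subset_convexHull ℝ K hk)).le
    linarith [hs w, hl s]
  · simp only [ofPred_forall]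
    exact convex_iInter fun w => convex_halfSpace_le
      ⟨fun x y => inner_add_left x y w, fun c x => real_inner_smul_left x w c⟩ _

end ConvexHull

section Maximizers

variable {α E : Type*} [TopologicalSpace α] [TopologicalSpace E] {φ : E → α → ℝ}
  {C : Set α} {U : Set E} {y : E}

theorem IsCompact.setOf_isMaxOn [T2Space α] {ψ : α → ℝ} (hC : IsCompact C)
    (hψ : ContinuousOn ψ C) : IsCompact {c ∈ C | IsMaxOn ψ C c} := by
  rcases C.eq_empty_or_nonempty with rfl | hne
  · simp
  obtain ⟨c₀, hc₀, hmax⟩ := hC.exists_isMaxOn hne hψ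
  have : {c ∈ C | IsMaxOn ψ C c} = C ∩ ψ ⁻¹' Ici (ψ c₀) := by
    ext c
    exact and_congr_right fun _ =>
      ⟨fun h => h hc₀, fun h => isMaxOn_iff.2 fun d hd => (hmax hd).trans h⟩
  rw [this]
  exact hC.of_isClosed_subset (hψ.preimage_isClosed_of_isClosed hC.isClosed isClosed_Ici)
    inter_subset_left

theorem eventually_maximizers_subset (hC : IsCompact C) (hU : U ∈ 𝓝 y)
    (hφ : ContinuousOn (uncurry φ) (U ×ˢ C)) {V : Set α} (hV : IsOpen V)
    (hyV : {c ∈ C | IsMaxOn (φ y) C c} ⊆ V) :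
    ∀ᶠ z in 𝓝 y, {c ∈ C | IsMaxOn (φ z) C c} ⊆ V := by
  -- A non-maximizer `d` at `y` is beaten by some `c`, and stays beaten near `(y, d)`.
  have hnot : ∀ d ∈ C \ V,
      ∀ᶠ p : E × α in 𝓝 (y, d), p.2 ∈ C → ∃ c ∈ C, φ p.1 p.2 < φ p.1 c := by
    rintro d ⟨hdC, hdV⟩
    obtain ⟨c, hcC, hlt⟩ : ∃ c ∈ C, φ y d < φ y c := by
      by_contra! h
      exact hdV (hyV ⟨hdC, isMaxOn_iff.2 h⟩)
    have hd : ContinuousWithinAt (fun p : E × α => φ p.1 p.2) (U ×ˢ C) (y, d) :=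
      hφ (y, d) ⟨mem_of_mem_nhds hU, hdC⟩
    have hc : ContinuousWithinAt (fun p : E × α => φ p.1 c) (U ×ˢ C) (y, d) :=
      ((hφ.uncurry_right c hcC).continuousAt hU).fst'.continuousWithinAt
    filter_upwards [eventually_nhdsWithin_iff.1 (hd.eventually_lt hc hlt),
      continuous_fst.continuousAt.preimage_mem_nhds hU] with p hp hpU hpC
    exact ⟨c, hcC, hp ⟨hpU, hpC⟩⟩
  filter_upwards [(hC.diff hV).eventually_forall_of_forall_eventually
    (P := fun z d => d ∈ C → ∃ c ∈ C, φ z d < φ z c) hnot] with z hz c ⟨hcC, hcmax⟩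
  by_contra hcV
  obtain ⟨d, hdC, hlt⟩ := hz c ⟨hcC, hcV⟩ hcC
  exact (hcmax hdC).not_gt hlt

end Maximizers

section Danskin

variable {α E : Type*} [TopologicalSpace α] [NormedAddCommGroup E] [NormedSpace ℝ E]
  {φ : E → α → ℝ} {φ' : E → α → E →L[ℝ] ℝ} {C : Set α} {U : Set E} {y : E}

theorem tendsto_add_smul_nhds_prod_nhdsGT (w : E) :
    Tendsto (fun p : E × ℝ => p.1 + p.2 • w) (𝓝 y ×ˢ 𝓝[>] 0) (𝓝 y) := by
  have : Tendsto (fun p : E × ℝ => p.1 + p.2 • w) (𝓝 (y, 0)) (𝓝 (y + (0 : ℝ) • w)) :=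
    (continuous_fst.add (continuous_snd.smul continuous_const)).tendsto _
  rw [zero_smul, add_zero, nhds_prod_eq] at this
  exact this.mono_left (prod_mono le_rfl nhdsWithin_le_nhds)

theorem eventually_forall_abs_sub_sub_le (hC : IsCompact C) (hU : U ∈ 𝓝 y)
    (hφ' : ContinuousOn (uncurry φ') (U ×ˢ C))
    (hderiv : ∀ z ∈ U, ∀ c ∈ C, HasFDerivAt (φ · c) (φ' z c) z) (w : E) {ε : ℝ}
    (hε : 0 < ε) :
    ∀ᶠ p : E × ℝ in 𝓝 y ×ˢ 𝓝[>] 0, ∀ c ∈ C,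
      |φ (p.1 + p.2 • w) c - φ p.1 c - p.2 * φ' y c w| ≤ p.2 * ε := by
  have hε' : 0 < ε / (‖w‖ + 1) := by positivity
  obtain ⟨v, hv, hvφ'⟩ := hC.mem_uniformity_of_prod hφ' (mem_of_mem_nhds hU)
    (dist_mem_uniformity hε')
  rw [nhdsWithin_eq_nhds.2 hU] at hv
  obtain ⟨δ, hδ, hball⟩ := Metric.mem_nhds_iff.1 (inter_mem hv hU)
  filter_upwards [tendsto_fst.eventually (ball_mem_nhds y hδ),
    (tendsto_add_smul_nhds_prod_nhdsGT w).eventually (ball_mem_nhds y hδ),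
    tendsto_snd.eventually self_mem_nhdsWithin] with ⟨x, t⟩ hx hxt (ht : 0 < t) c hc
  dsimp only at hx hxt ⊢
  have hmvt := (convex_ball y δ).norm_image_sub_le_of_norm_hasFDerivWithin_le'
    (f := (φ · c)) (φ := φ' y c)
    (fun ξ hξ => (hderiv ξ (hball hξ).2 c hc).hasFDerivWithinAt)
    (fun ξ hξ => by rw [← dist_eq_norm]; exact (hvφ' ξ (hball hξ).1 c hc).le) hx hxt
  have hnorm : ‖t • w‖ = t * ‖w‖ := by rw [norm_smul, Real.norm_of_nonneg ht.le]
  rw [add_sub_cancel_left, map_smul, smul_eq_mul, hnorm, Real.norm_eq_abs] at hmvt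
  refine hmvt.trans ?_
  rw [div_mul_eq_mul_div, div_le_iff₀ (by positivity)]
  nlinarith [norm_nonneg w]

theorem eventually_slope_sSup_le (hCne : C.Nonempty) (hC : IsCompact C) (hU : U ∈ 𝓝 y)
    (hφ : ContinuousOn (uncurry φ) (U ×ˢ C)) (hφ' : ContinuousOn (uncurry φ') (U ×ˢ C))
    (hderiv : ∀ z ∈ U, ∀ c ∈ C, HasFDerivAt (φ · c) (φ' z c) z) (w : E) {ε : ℝ}
    (hε : 0 < ε) :
    ∀ᶠ p : E × ℝ in 𝓝 y ×ˢ 𝓝[>] 0,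
      (sSup (φ (p.1 + p.2 • w) '' C) - sSup (φ p.1 '' C)) / p.2 ≤
        sSup ((fun c => φ' y c w) '' {c ∈ C | IsMaxOn (φ y) C c}) + ε := by
  set M := sSup ((fun c => φ' y c w) '' {c ∈ C | IsMaxOn (φ y) C c})
  have hψ : ContinuousOn (fun c => φ' y c w) C :=
    (hφ'.uncurry_left y (mem_of_mem_nhds hU)).clm_apply continuousOn_const
  have hM : ∀ c ∈ {c ∈ C | IsMaxOn (φ y) C c}, φ' y c w ≤ M := fun c hc =>
    le_csSup ((hC.image_of_continuousOn hψ).bddAbove.mono (image_mono (sep_subset _ _)))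
      ⟨c, hc, rfl⟩
  obtain ⟨V, hV, hVC⟩ := continuousOn_iff'.1 hψ (Iio (M + ε / 2)) isOpen_Iio
  have hV' (c : α) (hc : c ∈ C) : c ∈ V ↔ φ' y c w < M + ε / 2 := by
    simpa [hc] using (Set.ext_iff.1 hVC c).symm
  have hQV : {c ∈ C | IsMaxOn (φ y) C c} ⊆ V := fun c hc =>
    (hV' c hc.1).2 ((hM c hc).trans_lt (by linarith))
  have hline := tendsto_add_smul_nhds_prod_nhdsGT (y := y) w
  filter_upwards [hline.eventually (eventually_maximizers_subset hC hU hφ hV hQV),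
    hline.eventually hU, tendsto_fst.eventually hU, tendsto_snd.eventually self_mem_nhdsWithin,
    eventually_forall_abs_sub_sub_le hC hU hφ' hderiv w (half_pos hε)]
    with ⟨x, t⟩ hsub hxtU hxU (ht : 0 < t) hest
  dsimp only at hsub hxtU hxU hest ⊢
  obtain ⟨c, hcC, hcmax⟩ := hC.exists_isMaxOn hCne (hφ.uncurry_left _ hxtU)
  have hc : φ' y c w < M + ε / 2 := (hV' c hcC).1 (hsub ⟨hcC, hcmax⟩)
  have hx : φ x c ≤ sSup (φ x '' C) :=
    le_csSup (hC.image_of_continuousOn (hφ.uncurry_left x hxU)).bddAbove ⟨c, hcC, rfl⟩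
  have hxt : sSup (φ (x + t • w) '' C) = φ (x + t • w) c :=
    (hcmax.isLUB hcC).csSup_eq (hCne.image _)
  rw [hxt, div_le_iff₀ ht]
  nlinarith [(abs_le.1 (hest c hcC)).2]

theorem eventually_le_slope_sSup (hCne : C.Nonempty) (hC : IsCompact C) (hU : U ∈ 𝓝 y)
    (hφ : ContinuousOn (uncurry φ) (U ×ˢ C)) (hφ' : ContinuousOn (uncurry φ') (U ×ˢ C))
    (hderiv : ∀ z ∈ U, ∀ c ∈ C, HasFDerivAt (φ · c) (φ' z c) z) (w : E) {ε : ℝ}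
    (hε : 0 < ε) :
    ∀ᶠ t in 𝓝[>] 0, sSup ((fun c => φ' y c w) '' {c ∈ C | IsMaxOn (φ y) C c}) - ε ≤
      (sSup (φ (y + t • w) '' C) - sSup (φ y '' C)) / t := by
  obtain ⟨c₀, hc₀C, hc₀max⟩ :=
    hC.exists_isMaxOn hCne (hφ.uncurry_left y (mem_of_mem_nhds hU))
  have hQ : {c ∈ C | IsMaxOn (φ y) C c}.Nonempty := ⟨c₀, hc₀C, hc₀max⟩
  obtain ⟨_, ⟨c, hc, rfl⟩, hlt⟩ := exists_lt_of_lt_csSup (hQ.image (fun c => φ' y c w))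
    (sub_lt_self (sSup ((fun c => φ' y c w) '' {c ∈ C | IsMaxOn (φ y) C c})) (half_pos hε))
  have hemb : Tendsto (fun t : ℝ => (y, t)) (𝓝[>] 0) (𝓝 y ×ˢ 𝓝[>] 0) :=
    tendsto_const_nhds.prodMk tendsto_id
  filter_upwards
    [hemb.eventually (eventually_forall_abs_sub_sub_le hC hU hφ' hderiv w (half_pos hε)),
    (tendsto_add_smul_nhds_prod_nhdsGT w).comp hemb |>.eventually hU, self_mem_nhdsWithin]
    with t hest hytU (ht : 0 < t)
  have hyt : φ (y + t • w) c ≤ sSup (φ (y + t • w) '' C) :=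
    le_csSup (hC.image_of_continuousOn (hφ.uncurry_left _ hytU)).bddAbove ⟨c, hc.1, rfl⟩
  have hy : sSup (φ y '' C) = φ y c := (hc.2.isLUB hc.1).csSup_eq (hCne.image _)
  rw [hy, le_div_iff₀ ht]
  nlinarith [(abs_le.1 (hest c hc.1)).1]

end Danskin

theorem diniDeriv_eq_and_clarkeDeriv_eq {J : ℕ} {g : EuclideanSpace ℝ (Fin J) → ℝ}
    {y w : EuclideanSpace ℝ (Fin J)} {M : ℝ}
    (hup : ∀ ε > 0, ∀ᶠ p : EuclideanSpace ℝ (Fin J) × ℝ in 𝓝 y ×ˢ 𝓝[>] 0,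
      (g (p.1 + p.2 • w) - g p.1) / p.2 ≤ M + ε)
    (hlow : ∀ ε > 0, ∀ᶠ t in 𝓝[>] 0, M - ε ≤ (g (y + t • w) - g y) / t) :
    diniDeriv g y w = M ∧ clarkeDeriv g y w = M := by
  have hemb : Tendsto (fun t : ℝ => (y, t)) (𝓝[>] 0) (𝓝 y ×ˢ 𝓝[>] 0) :=
    tendsto_const_nhds.prodMk tendsto_id
  have hfreq (ε : ℝ) (hε : 0 < ε) : ∃ᶠ p in 𝓝 y ×ˢ 𝓝[>] 0,
      M - ε ≤ (g (p.1 + p.2 • w) - g p.1) / p.2 :=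
    hemb.frequently (hlow ε hε).frequently
  have hlim : Tendsto (fun t => (g (y + t • w) - g y) / t) (𝓝[>] 0) (𝓝 M) := by
    refine tendsto_order.2 ⟨fun a ha => ?_, fun a ha => ?_⟩
    · filter_upwards [hlow ((M - a) / 2) (by linarith)] with t ht
      linarith
    · filter_upwards [hemb.eventually (hup ((a - M) / 2) (by linarith))] with t ht
      linarith
  refine ⟨hlim.liminf_eq, le_antisymm ?_ ?_⟩
  · exact le_of_forall_pos_le_add fun ε hε =>
      limsup_le_of_le (IsCoboundedUnder.of_frequently_ge (hfreq 1 one_pos)) (hup ε hε)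
  · exact le_of_forall_sub_le fun ε hε =>
      le_limsup_of_frequently_le (hfreq ε hε) ⟨M + 1, hup 1 one_pos⟩

theorem diniDeriv_sSup_eq_and_clarkeDeriv_sSup_eq {J : ℕ} {α : Type*} [TopologicalSpace α]
    {φ : EuclideanSpace ℝ (Fin J) → α → ℝ}
    {φ' : EuclideanSpace ℝ (Fin J) → α → EuclideanSpace ℝ (Fin J) →L[ℝ] ℝ} {C : Set α}
    {U : Set (EuclideanSpace ℝ (Fin J))} {y : EuclideanSpace ℝ (Fin J)} (hCne : C.Nonempty)
    (hC : IsCompact C) (hU : U ∈ 𝓝 y) (hφ : ContinuousOn (uncurry φ) (U ×ˢ C))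
    (hφ' : ContinuousOn (uncurry φ') (U ×ˢ C))
    (hderiv : ∀ z ∈ U, ∀ c ∈ C, HasFDerivAt (φ · c) (φ' z c) z) (w : EuclideanSpace ℝ (Fin J)) :
    diniDeriv (fun z => sSup (φ z '' C)) y w =
        sSup ((fun c => φ' y c w) '' {c ∈ C | IsMaxOn (φ y) C c}) ∧
      clarkeDeriv (fun z => sSup (φ z '' C)) y w =
        sSup ((fun c => φ' y c w) '' {c ∈ C | IsMaxOn (φ y) C c}) :=
  diniDeriv_eq_and_clarkeDeriv_eq
    (fun _ hε => eventually_slope_sSup_le hCne hC hU hφ hφ' hderiv w hε)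
    (fun _ hε => eventually_le_slope_sSup hCne hC hU hφ hφ' hderiv w hε)

section Bregman

theorem inner_hessian_comm {E : Type*} [NormedAddCommGroup E] [InnerProductSpace ℝ E]
    [CompleteSpace E] {f : E → ℝ} {f' : E → E} {f'' : E →L[ℝ] E} {z : E}
    (hf' : ∀ᶠ x in 𝓝 z, HasGradientAt f (f' x) x) (hf'' : HasFDerivAt f' f'' z) (u v : E) :
    ⟪f'' u, v⟫ = ⟪f'' v, u⟫ := by
  have := second_derivative_symmetric_of_eventually_of_real
    (hf'.mono fun x hx => hx.hasFDerivAt)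
    ((InnerProductSpace.toDual ℝ E).toContinuousLinearEquiv.hasFDerivAt.comp z hf'') u v
  simpa using this

variable {J : ℕ} {f : EuclideanSpace ℝ (Fin J) → ℝ}
  {f' : EuclideanSpace ℝ (Fin J) → EuclideanSpace ℝ (Fin J)}

theorem hasFDerivAt_bregman
    {f'' : EuclideanSpace ℝ (Fin J) →L[ℝ] EuclideanSpace ℝ (Fin J)}
    {c z : EuclideanSpace ℝ (Fin J)}
    (hf' : ∀ᶠ x in 𝓝 z, HasGradientAt f (f' x) x) (hf'' : HasFDerivAt f' f'' z) :
    HasFDerivAt (fun z => bregman f f' c z) (innerSL ℝ (f'' (z - c))) z := by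
  have h := ((hasFDerivAt_const (f c) z).sub hf'.self_of_nhds.hasFDerivAt).sub
    (hf''.inner ℝ ((hasFDerivAt_const c z).sub (hasFDerivAt_id z)))
  refine h.congr_fderiv (ContinuousLinearMap.ext fun v => ?_)
  simp [inner_hessian_comm hf' hf'' v, inner_sub_left]

theorem continuousOn_bregman {U C : Set (EuclideanSpace ℝ (Fin J))} (hf : ContinuousOn f U)
    (hf' : ContinuousOn f' U) (hCU : C ⊆ U) :
    ContinuousOn (uncurry fun z c => bregman f f' c z) (U ×ˢ C) :=
  ((hf.comp continuousOn_snd fun _ hp => hCU hp.2).sub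
    (hf.comp continuousOn_fst fun _ hp => hp.1)).sub
    ((hf'.comp continuousOn_fst fun _ hp => hp.1).inner (continuousOn_snd.sub continuousOn_fst))

end Bregman

theorem farthest_distance_clarke_regular_general {J : ℕ}
    (f : EuclideanSpace ℝ (Fin J) → ℝ) (U : Set (EuclideanSpace ℝ (Fin J)))
    (hU : IsOpen U)
    (f' : EuclideanSpace ℝ (Fin J) → EuclideanSpace ℝ (Fin J))
    (hf' : ∀ y ∈ U, HasGradientAt f (f' y) y)
    -- `f` is twice continuously differentiable on `U` with Hessian `f''`
    (f'' : EuclideanSpace ℝ (Fin J) → EuclideanSpace ℝ (Fin J) →L[ℝ] EuclideanSpace ℝ (Fin J))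
    (hf'' : ∀ y ∈ U, HasFDerivAt f' (f'' y) y)
    (hf''cont : ContinuousOn f'' U)
    (C : Set (EuclideanSpace ℝ (Fin J))) (hCne : C.Nonempty)
    (hCcp : IsCompact C) (hCU : C ⊆ U)
    (y : EuclideanSpace ℝ (Fin J)) (hy : y ∈ U) :
    (∀ w, diniDeriv (fun z => sSup ((fun c => bregman f f' c z) '' C)) y w =
        sSup ((fun x => ⟪f'' y (y - x), w⟫) '' farthestSet f f' C y)) ∧
      (∀ w, clarkeDeriv (fun z => sSup ((fun c => bregman f f' c z) '' C)) y w =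
        sSup ((fun x => ⟪f'' y (y - x), w⟫) '' farthestSet f f' C y)) ∧
      {s : EuclideanSpace ℝ (Fin J) |
          ∀ w, ⟪s, w⟫ ≤ clarkeDeriv (fun z => sSup ((fun c => bregman f f' c z) '' C)) y w} =
        (fun x => f'' y (y - x)) '' convexHull ℝ (farthestSet f f' C y) := by
  have hUy : U ∈ 𝓝 y := hU.mem_nhds hy
  have hderiv : ∀ z ∈ U, ∀ c ∈ C, HasFDerivAt (fun z => bregman f f' c z)
      (innerSL ℝ (f'' z (z - c))) z := fun z hz _ _ =>
    hasFDerivAt_bregman (eventually_of_mem (hU.mem_nhds hz) hf') (hf'' z hz)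
  have hφ : ContinuousOn (uncurry fun z c => bregman f f' c z) (U ×ˢ C) :=
    continuousOn_bregman (fun z hz => (hf' z hz).hasFDerivAt.continuousAt.continuousWithinAt)
      (fun z hz => (hf'' z hz).continuousAt.continuousWithinAt) hCU
  have hφ' : ContinuousOn (uncurry fun z c => innerSL ℝ (f'' z (z - c))) (U ×ˢ C) :=
    (innerSL ℝ).continuous.comp_continuousOn
      ((hf''cont.comp continuousOn_fst fun _ hp => hp.1).clm_apply
        (continuousOn_fst.sub continuousOn_snd))
  have hsubderiv := diniDeriv_sSup_eq_and_clarkeDeriv_sSup_eq hCne hCcp hUy hφ hφ' hderiv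
  refine ⟨fun w => (hsubderiv w).1, fun w => (hsubderiv w).2, ?_⟩
  have hQ : IsCompact (farthestSet f f' C y) := hCcp.setOf_isMaxOn (hφ.uncurry_left y hy)
  have hQne : (farthestSet f f' C y).Nonempty := hCcp.exists_isMaxOn hCne (hφ.uncurry_left y hy)
  let A : EuclideanSpace ℝ (Fin J) →ᵃ[ℝ] EuclideanSpace ℝ (Fin J) :=
    AffineMap.const ℝ _ (f'' y y) - (f'' y : _ →ₗ[ℝ] _).toAffineMap
  have hA : ⇑A = fun x => f'' y (y - x) := funext fun x => by simp [A, map_sub]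
  have hclarke (w : EuclideanSpace ℝ (Fin J)) :
      clarkeDeriv (fun z => sSup ((fun c => bregman f f' c z) '' C)) y w =
        sSup ((⟪·, w⟫) '' (A '' farthestSet f f' C y)) := by
    rw [(hsubderiv w).2, image_image, hA]
    rfl
  simp only [hclarke]
  rw [setOf_forall_inner_le_sSup_eq_convexHull (hQ.image (hA ▸ by fun_prop)) (hQne.image A),
    ← A.image_convexHull, hA]

/-- For `f` twice continuously differentiable, the Dini and Clarke subderivatives of the
farthest-distance function coincide and equal `max ⟪∇²f(y)(y − Q_C(y)), w⟫`; in particular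
it is Clarke regular, with Clarke subdifferential `∇²f(y)[y − conv Q_C(y)]`. -/
theorem farthest_distance_clarke_regular {J : ℕ}
    (f : EuclideanSpace ℝ (Fin J) → ℝ) (U : Set (EuclideanSpace ℝ (Fin J)))
    (hU : IsOpen U) (hUne : U.Nonempty)
    (hconv : StrictConvexOn ℝ U f)
    (f' : EuclideanSpace ℝ (Fin J) → EuclideanSpace ℝ (Fin J))
    (hf' : ∀ y ∈ U, HasGradientAt f (f' y) y)
    (hcoer : Filter.Tendsto (fun x : EuclideanSpace ℝ (Fin J) => f x / ‖x‖)
      (Filter.comap norm Filter.atTop) Filter.atTop)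
    -- `f` is twice continuously differentiable on `U` with Hessian `f''`
    (f'' : EuclideanSpace ℝ (Fin J) → EuclideanSpace ℝ (Fin J) →L[ℝ] EuclideanSpace ℝ (Fin J))
    (hf'' : ∀ y ∈ U, HasFDerivAt f' (f'' y) y)
    (hf''cont : ContinuousOn f'' U)
    (C : Set (EuclideanSpace ℝ (Fin J))) (hCne : C.Nonempty)
    (hCcp : IsCompact C) (hCU : C ⊆ U)
    (y : EuclideanSpace ℝ (Fin J)) (hy : y ∈ U) :
    (∀ w, diniDeriv (fun z => sSup ((fun c => bregman f f' c z) '' C)) y w =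
        sSup ((fun x => ⟪f'' y (y - x), w⟫) '' farthestSet f f' C y)) ∧
      (∀ w, clarkeDeriv (fun z => sSup ((fun c => bregman f f' c z) '' C)) y w =
        sSup ((fun x => ⟪f'' y (y - x), w⟫) '' farthestSet f f' C y)) ∧
      {s : EuclideanSpace ℝ (Fin J) |
          ∀ w, ⟪s, w⟫ ≤ clarkeDeriv (fun z => sSup ((fun c => bregman f f' c z) '' C)) y w} =
        (fun x => f'' y (y - x)) '' convexHull ℝ (farthestSet f f' C y) :=
  farthest_distance_clarke_regular_general f U hU f' hf' f'' hf'' hf''cont C hCne hCcp hCU y hy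
end

section
/- If the function x ↦ −f(−x) + ι_{−C}(x) (i.e., −f restricted to C supported on −C) is convex, then C is a singleton. -/
theorem ConvexOn.comp_neg {𝕜 E β : Type*} [Semiring 𝕜] [PartialOrder 𝕜] [AddCommGroup E]
    [Module 𝕜 E] [AddCommMonoid β] [PartialOrder β] [SMul 𝕜 β] {s : Set E} {f : E → β}
    (hf : ConvexOn 𝕜 (-s) f) : ConvexOn 𝕜 s (fun x => f (-x)) := by
  have hpre : ⇑(-LinearMap.id : E →ₗ[𝕜] E) ⁻¹' (-s) = s := by ext; simp
  exact hpre ▸ hf.comp_linearMap (-LinearMap.id)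

theorem StrictConvexOn.subsingleton_of_concaveOn {𝕜 E β : Type*} [Field 𝕜] [LinearOrder 𝕜]
    [IsStrictOrderedRing 𝕜] [AddCommMonoid E] [SMul 𝕜 E] [AddCommMonoid β] [PartialOrder β]
    [SMul 𝕜 β] {s : Set E} {f : E → β} (hf : StrictConvexOn 𝕜 s f) (hf' : ConcaveOn 𝕜 s f) :
    s.Subsingleton := by
  intro x hx y hy
  by_contra hxy
  have hhalf : (0 : 𝕜) < 1 / 2 := one_half_pos
  have hsum : (1 / 2 : 𝕜) + 1 / 2 = 1 := add_halves 1
  exact (hf.2 hx hy hxy hhalf hhalf hsum).not_ge (hf'.2 hx hy hhalf.le hhalf.le hsum)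

theorem convexity_of_neg_f_implies_singleton_general {J : ℕ}
    (f : EuclideanSpace ℝ (Fin J) → ℝ) (U : Set (EuclideanSpace ℝ (Fin J)))
    (hconv : StrictConvexOn ℝ U f)
    (C : Set (EuclideanSpace ℝ (Fin J))) (hCne : C.Nonempty)
    (hCU : C ⊆ U)
    (h : ConvexOn ℝ (-C) (fun x => -f (-x))) :
    ∃ c, C = {c} := by
  have hneg : ConvexOn ℝ C (fun x => -f x) := by simpa only [neg_neg] using h.comp_neg
  have hconcave : ConcaveOn ℝ C f := neg_convexOn_iff.1 hneg
  exact Set.exists_eq_singleton_iff_nonempty_subsingleton.2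
    ⟨hCne, (hconv.subset hCU hconcave.1).subsingleton_of_concaveOn hconcave⟩

/-- If `x ↦ −f(−x)` is convex on `−C` (i.e. `−f∨ + ι_{−C}` is a convex function),
where `f` is essentially strictly convex, then `C` is a singleton. -/
theorem convexity_of_neg_f_implies_singleton {J : ℕ}
    (f : EuclideanSpace ℝ (Fin J) → ℝ) (U : Set (EuclideanSpace ℝ (Fin J)))
    (hU : IsOpen U) (hUne : U.Nonempty)
    (hconv : StrictConvexOn ℝ U f)
    (C : Set (EuclideanSpace ℝ (Fin J))) (hCne : C.Nonempty)
    (hCcp : IsCompact C) (hCU : C ⊆ U)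
    (h : ConvexOn ℝ (-C) (fun x => -f (-x))) :
    ∃ c, C = {c} :=
  convexity_of_neg_f_implies_singleton_general f U hconv C hCne hCU h
end

section
/- The function θ_C(x) := inf_{c∈C}(f(x+c) − f(c)) is convex if and only if C is a singleton. -/
open scoped RealInnerProductSpace Pointwise

/-!
If `c₁ ≠ c₂` lie in `C` and `m` is their midpoint, then `m - c₁` and `m - c₂` average to `0`,
where `θ_C` vanishes, while `θ_C (m - cᵢ) ≤ f m - f cᵢ`. Strict convexity of `f` makes the
average of these two bounds negative, so `θ_C` is not convex. For `C = {c}`, `θ_C` is a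
translate of `f` minus a constant. A gradient at one point of `C` bounds `f` below on bounded
sets by an affine function, which makes the infimum defining `θ_C` a genuine one rather than
the junk value `sInf` of an unbounded set.
-/

/-- `θ_C(x) = inf_{c ∈ C, x+c ∈ dom f}(f(x+c) − f(c))`, the finite part of
`x ↦ inf_{c∈C}(f(x+c) − f(c))`. -/
noncomputable def thetaC {J : ℕ} (f : EuclideanSpace ℝ (Fin J) → ℝ)
    (domf C : Set (EuclideanSpace ℝ (Fin J))) (x : EuclideanSpace ℝ (Fin J)) : ℝ :=
  sInf ((fun c => f (x + c) - f c) '' {c ∈ C | x + c ∈ domf})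

section Gradient

variable {E : Type*} [NormedAddCommGroup E] [InnerProductSpace ℝ E] [CompleteSpace E]
  {s t : Set E} {f : E → ℝ} {x y p : E}

theorem HasGradientAt.hasDerivAt_comp_add_smul (hp : HasGradientAt f p x) (v : E) :
    HasDerivAt (fun t : ℝ => f (x + t • v)) ⟪p, v⟫ 0 := by
  have hline : HasDerivAt (fun t : ℝ => x + t • v) v 0 := by
    simpa using ((hasDerivAt_id (0 : ℝ)).smul_const v).const_add x
  have hf : HasFDerivAt f (InnerProductSpace.toDual ℝ E p) (x + (0 : ℝ) • v) := by
    simpa using hp.hasFDerivAt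
  exact hf.comp_hasDerivAt 0 hline

theorem ConvexOn.inner_le_sub_of_hasGradientAt_s18 (hf : ConvexOn ℝ s f) (hx : x ∈ s) (hy : y ∈ s)
    (hp : HasGradientAt f p x) : ⟪p, y - x⟫ ≤ f y - f x := by
  let g : ℝ →ᵃ[ℝ] E := AffineMap.lineMap x y
  have hg : ∀ t : ℝ, g t = x + t • (y - x) := fun t => by
    rw [AffineMap.lineMap_apply, vsub_eq_sub, vadd_eq_add, add_comm]
  have hline : HasDerivAt (f ∘ g) ⟪p, y - x⟫ 0 := by
    simpa only [Function.comp_def, hg] using hp.hasDerivAt_comp_add_smul (y - x)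
  have h0 : (0 : ℝ) ∈ g ⁻¹' s := by simpa [g] using hx
  have h1 : (1 : ℝ) ∈ g ⁻¹' s := by simpa [g] using hy
  simpa [slope_def_field, g] using (hf.comp_affineMap g).le_slope_of_hasDerivAt h0 h1 one_pos hline

theorem ConvexOn.bddBelow_image_inter_of_hasGradientAt (hf : ConvexOn ℝ s f) (hx : x ∈ s)
    (hp : HasGradientAt f p x) (ht : Bornology.IsBounded t) : BddBelow (f '' (s ∩ t)) := by
  obtain ⟨R, hR⟩ := ht.exists_norm_le
  refine ⟨f x - ‖p‖ * (R + ‖x‖), ?_⟩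
  rintro _ ⟨y, ⟨hys, hyt⟩, rfl⟩
  have hdist : ‖y - x‖ ≤ R + ‖x‖ := (norm_sub_le y x).trans (by linarith [hR y hyt])
  calc f x - ‖p‖ * (R + ‖x‖) ≤ f x - ‖p‖ * ‖y - x‖ := by gcongr
    _ ≤ f x + ⟪p, y - x⟫ := by linarith [neg_le_of_abs_le (abs_real_inner_le_norm p (y - x))]
    _ ≤ f y := by linarith [hf.inner_le_sub_of_hasGradientAt_s18 hx hys hp]

end Gradient

section ThetaC

variable {J : ℕ} {f : EuclideanSpace ℝ (Fin J) → ℝ} {s C : Set (EuclideanSpace ℝ (Fin J))}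
  {x c c₀ p : EuclideanSpace ℝ (Fin J)}

theorem thetaC_zero (hC : C.Nonempty) (hCs : C ⊆ s) : thetaC f s C 0 = 0 := by
  simp only [thetaC, zero_add, sub_self, Set.sep_mem_eq, Set.inter_eq_left.2 hCs,
    hC.image_const, csInf_singleton]

theorem thetaC_le_sub (hf : ConvexOn ℝ s f) (hc₀ : c₀ ∈ s) (hp : HasGradientAt f p c₀)
    (hC : IsCompact C) (hfC : ContinuousOn f C) (hc : c ∈ C) (hxc : x + c ∈ s) :
    thetaC f s C x ≤ f (x + c) - f c := by
  refine csInf_le ?_ ⟨c, ⟨hc, hxc⟩, rfl⟩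
  obtain ⟨a, ha⟩ := hf.bddBelow_image_inter_of_hasGradientAt hc₀ hp (hC.isBounded.vadd x)
  obtain ⟨b, hb⟩ := hC.bddAbove_image hfC
  refine ⟨a - b, ?_⟩
  rintro _ ⟨c', ⟨hc', hxc'⟩, rfl⟩
  have hlow : a ≤ f (x + c') := ha ⟨x + c', ⟨hxc', c', hc', rfl⟩, rfl⟩
  have hup : f c' ≤ b := hb ⟨c', hc', rfl⟩
  dsimp only
  linarith

theorem convexOn_thetaC_singleton (hf : ConvexOn ℝ s f) (c : EuclideanSpace ℝ (Fin J)) :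
    ConvexOn ℝ (s - {c}) (thetaC f s {c}) := by
  have hpre : s - {c} = (fun z => c + z) ⁻¹' s := by
    ext z; simp [Set.sub_singleton, sub_eq_iff_eq_add, add_comm]
  rw [hpre]
  refine ((hf.translate_left c).add_const (-f c)).congr fun z hz => ?_
  have hset : {c' ∈ ({c} : Set _) | z + c' ∈ s} = {c} :=
    Set.sep_eq_self_iff_mem_true.2 fun _ hc' => by rwa [Set.mem_singleton_iff.1 hc', add_comm]
  simp only [thetaC, hset, Set.image_singleton, csInf_singleton, Pi.add_apply,
    Function.comp_apply, sub_eq_add_neg]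

theorem not_convexOn_thetaC_of_ne {U : Set (EuclideanSpace ℝ (Fin J))}
    (hf : StrictConvexOn ℝ U f) (hUs : U ⊆ s) (hCU : C ⊆ U)
    (hle : ∀ x, ∀ c ∈ C, x + c ∈ s → thetaC f s C x ≤ f (x + c) - f c)
    {c₁ c₂ : EuclideanSpace ℝ (Fin J)} (h₁ : c₁ ∈ C) (h₂ : c₂ ∈ C) (hne : c₁ ≠ c₂) :
    ¬ConvexOn ℝ (s - C) (thetaC f s C) := by
  intro hθ
  set m := (1 / 2 : ℝ) • c₁ + (1 / 2 : ℝ) • c₂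
  have hm : m ∈ s := hUs (hf.1 (hCU h₁) (hCU h₂) (by norm_num) (by norm_num) (by norm_num))
  have hfm : f m < 1 / 2 * f c₁ + 1 / 2 * f c₂ :=
    hf.2 (hCU h₁) (hCU h₂) hne (by norm_num : (0 : ℝ) < 1 / 2)
      (by norm_num : (0 : ℝ) < 1 / 2) (by norm_num)
  have hmid : (1 / 2 : ℝ) • (m - c₁) + (1 / 2 : ℝ) • (m - c₂) = 0 := by simp only [m]; module
  have hθmid := hθ.2 (Set.sub_mem_sub hm h₁) (Set.sub_mem_sub hm h₂)
    (by norm_num : (0 : ℝ) ≤ 1 / 2) (by norm_num : (0 : ℝ) ≤ 1 / 2) (by norm_num)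
  rw [hmid, thetaC_zero ⟨c₁, h₁⟩ (hCU.trans hUs), smul_eq_mul, smul_eq_mul] at hθmid
  have hθ₁ := hle (m - c₁) c₁ h₁ (by rwa [sub_add_cancel])
  have hθ₂ := hle (m - c₂) c₂ h₂ (by rwa [sub_add_cancel])
  rw [sub_add_cancel] at hθ₁ hθ₂
  linarith

end ThetaC

theorem thetaC_convex_iff_singleton_general {J : ℕ}
    (f : EuclideanSpace ℝ (Fin J) → ℝ)
    (domf : Set (EuclideanSpace ℝ (Fin J))) (U : Set (EuclideanSpace ℝ (Fin J)))
    (hdom : U = interior domf)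
    (hconv : ConvexOn ℝ domf f) (hsconv : StrictConvexOn ℝ U f)
    (f' : EuclideanSpace ℝ (Fin J) → EuclideanSpace ℝ (Fin J))
    (hf' : ∀ y ∈ U, HasGradientAt f (f' y) y)
    (C : Set (EuclideanSpace ℝ (Fin J))) (hCne : C.Nonempty)
    (hCcp : IsCompact C) (hCU : C ⊆ U) :
    ConvexOn ℝ (domf - C) (thetaC f domf C) ↔ ∃ c, C = {c} := by
  have hUd : U ⊆ domf := hdom ▸ interior_subset
  constructor
  · intro hθ
    obtain ⟨c₀, hc₀⟩ := hCne
    have hfC : ContinuousOn f C := fun c hc =>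
      (hf' c (hCU hc)).differentiableAt.continuousAt.continuousWithinAt
    have hle : ∀ x, ∀ c ∈ C, x + c ∈ domf → thetaC f domf C x ≤ f (x + c) - f c :=
      fun _ _ hc hxc => thetaC_le_sub hconv (hUd (hCU hc₀)) (hf' c₀ (hCU hc₀)) hCcp hfC hc hxc
    refine ⟨c₀, Set.eq_singleton_iff_unique_mem.2 ⟨hc₀, fun c hc => ?_⟩⟩
    by_contra hne
    exact not_convexOn_thetaC_of_ne hsconv hUd hCU hle hc hc₀ hne hθ
  · rintro ⟨c, rfl⟩
    exact convexOn_thetaC_singleton hconv c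

/-- `θ_C` is convex (as an extended-real-valued function, i.e. convex on its domain
`dom f − C`) if and only if `C` is a singleton. -/
theorem thetaC_convex_iff_singleton {J : ℕ}
    (f : EuclideanSpace ℝ (Fin J) → ℝ)
    (domf : Set (EuclideanSpace ℝ (Fin J))) (U : Set (EuclideanSpace ℝ (Fin J)))
    (hdom : U = interior domf) (hUne : U.Nonempty)
    (hconv : ConvexOn ℝ domf f) (hsconv : StrictConvexOn ℝ U f)
    (f' : EuclideanSpace ℝ (Fin J) → EuclideanSpace ℝ (Fin J))
    (hf' : ∀ y ∈ U, HasGradientAt f (f' y) y)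
    (hcoer : Filter.Tendsto (fun x : EuclideanSpace ℝ (Fin J) => f x / ‖x‖)
      (Filter.comap norm Filter.atTop) Filter.atTop)
    (C : Set (EuclideanSpace ℝ (Fin J))) (hCne : C.Nonempty)
    (hCcp : IsCompact C) (hCU : C ⊆ U) :
    ConvexOn ℝ (domf - C) (thetaC f domf C) ↔ ∃ c, C = {c} :=
  thetaC_convex_iff_singleton_general f domf U hdom hconv hsconv f' hf' C hCne hCcp hCU
end

section
/- Let f be a Legendre function on ℝ^J with conjugate f*, and C ⊆ int dom f nonempty compact. Then for every y ∈ int dom f, the right Bregman farthest-point set of y (maximizers of c ↦ D_f(y,c) over C) equals ∇f* applied to the left Bregman farthest-point set of ∇f(y) in ∇f(C) with respect to D_{f*}; i.e., argmax_{c∈C} D_f(y,c) = ∇f*(argmax_{c*∈∇f(C)} D_{f*}(c*, ∇f(y))). -/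
/-!
The Fenchel–Young equality `f*(∇f c) = ⟪∇f c, c⟫ - f c` together with `∇f* ∘ ∇f = id` turns
`D_{f*}(∇f c, ∇f y)` into `D_f(y, c)`. Hence `∇f` carries the objective of the right farthest-point
problem on `C` to that of the left farthest-point problem on `∇f(C)`, and `∇f*` carries the
maximizers back.
-/

open scoped RealInnerProductSpace

theorem bregman_conj_gradient_gradient {J : ℕ}
    {f fstar : EuclideanSpace ℝ (Fin J) → ℝ} {f' g : EuclideanSpace ℝ (Fin J) → EuclideanSpace ℝ (Fin J)}
    {c y : EuclideanSpace ℝ (Fin J)} (hgy : g (f' y) = y)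
    (hFYc : fstar (f' c) = ⟪f' c, c⟫ - f c) (hFYy : fstar (f' y) = ⟪f' y, y⟫ - f y) :
    bregman fstar g (f' c) (f' y) = bregman f f' y c := by
  simp only [bregman, hFYc, hFYy, hgy, inner_sub_right, real_inner_comm y]
  ring

theorem maximizers_eq_image_maximizers_of_leftInvOn {α β γ : Type*} [Preorder γ]
    {F : α → γ} {G : β → γ} {φ : α → β} {ψ : β → α} {C : Set α}
    (hψ : Set.LeftInvOn ψ φ C) (hG : ∀ c ∈ C, G (φ c) = F c) :
    {c ∈ C | ∀ d ∈ C, F d ≤ F c} = ψ '' {b ∈ φ '' C | ∀ b' ∈ φ '' C, G b' ≤ G b} := by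
  ext x
  constructor
  · rintro ⟨hxC, hmax⟩
    refine ⟨φ x, ⟨Set.mem_image_of_mem φ hxC, ?_⟩, hψ hxC⟩
    rintro _ ⟨d, hdC, rfl⟩
    rw [hG d hdC, hG x hxC]
    exact hmax d hdC
  · rintro ⟨_, ⟨⟨c, hcC, rfl⟩, hmax⟩, rfl⟩
    rw [hψ hcC]
    refine ⟨hcC, fun d hdC => ?_⟩
    simpa only [hG d hdC, hG c hcC] using hmax (φ d) (Set.mem_image_of_mem φ hdC)

theorem right_farthest_eq_dual_left_farthest_general {J : ℕ}
    (f : EuclideanSpace ℝ (Fin J) → ℝ) (U : Set (EuclideanSpace ℝ (Fin J)))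
    (f' : EuclideanSpace ℝ (Fin J) → EuclideanSpace ℝ (Fin J))
    -- `g = ∇f*` is the inverse of `∇f : U → int dom f*  (= f' '' U)`
    (g : EuclideanSpace ℝ (Fin J) → EuclideanSpace ℝ (Fin J))
    (hgl : ∀ y ∈ U, g (f' y) = y)
    -- the conjugate `f*`, determined on `f' '' U` by the Fenchel--Young equality
    (fstar : EuclideanSpace ℝ (Fin J) → ℝ)
    (hFY : ∀ y ∈ U, fstar (f' y) = ⟪f' y, y⟫ - f y)
    (C : Set (EuclideanSpace ℝ (Fin J))) (hCU : C ⊆ U)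
    (y : EuclideanSpace ℝ (Fin J)) (hy : y ∈ U) :
    {c ∈ C | ∀ d ∈ C, bregman f f' y d ≤ bregman f f' y c} =
      g '' {cs ∈ f' '' C | ∀ ds ∈ f' '' C,
        bregman fstar g ds (f' y) ≤ bregman fstar g cs (f' y)} :=
  maximizers_eq_image_maximizers_of_leftInvOn (fun c hc => hgl c (hCU hc)) fun c hc =>
    bregman_conj_gradient_gradient (hgl y hy) (hFY c (hCU hc)) (hFY y hy)

/-- For a Legendre function `f` with conjugate `f*`, the right Bregman farthest-point set
of `y ∈ int dom f` in `C` equals `∇f*` applied to the left Bregman farthest-point set of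
`∇f(y)` in `∇f(C)` with respect to `D_{f*}`. -/
theorem right_farthest_eq_dual_left_farthest {J : ℕ}
    (f : EuclideanSpace ℝ (Fin J) → ℝ) (U : Set (EuclideanSpace ℝ (Fin J)))
    (hU : IsOpen U) (hUne : U.Nonempty)
    (hconv : StrictConvexOn ℝ U f)
    (f' : EuclideanSpace ℝ (Fin J) → EuclideanSpace ℝ (Fin J))
    (hf' : ∀ y ∈ U, HasGradientAt f (f' y) y)
    -- `g = ∇f*` is the inverse of `∇f : U → int dom f*  (= f' '' U)`
    (g : EuclideanSpace ℝ (Fin J) → EuclideanSpace ℝ (Fin J))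
    (hgl : ∀ y ∈ U, g (f' y) = y)
    -- the conjugate `f*`, determined on `f' '' U` by the Fenchel--Young equality
    (fstar : EuclideanSpace ℝ (Fin J) → ℝ)
    (hFY : ∀ y ∈ U, fstar (f' y) = ⟪f' y, y⟫ - f y)
    (C : Set (EuclideanSpace ℝ (Fin J))) (hCne : C.Nonempty)
    (hCcp : IsCompact C) (hCU : C ⊆ U)
    (y : EuclideanSpace ℝ (Fin J)) (hy : y ∈ U) :
    {c ∈ C | ∀ d ∈ C, bregman f f' y d ≤ bregman f f' y c} =
      g '' {cs ∈ f' '' C | ∀ ds ∈ f' '' C,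
        bregman fstar g ds (f' y) ≤ bregman fstar g cs (f' y)} :=
  right_farthest_eq_dual_left_farthest_general f U f' g hgl fstar hFY C hCU y hy
end
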